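/- arXiv:math/0402450 — 7 statements merged into one kernel-verified Lean document; each statement's English description precedes it below -/
import Mathlib

section
/- If C and D are updown categories, then their product category C × D, with objects Ob C × Ob D, morphism sets Hom((c,d),(c',d')) = Hom(c,c') × Hom(d,d'), and rank |(c,d)| = |c| + |d|, is again an updown category. -/
/-! Core definitions: updown categories (Hoffman, "Updown categories"). -/

/-- The underlying data of a (small) category equipped with an ℕ-valued rank,
finite levels (given as `Finset`s) and a distinguished rank-0 object `zero`. -/
structure UpdownData where
  Obj : Type
  Hom : Obj → Obj → Type
  id : ∀ p : Obj, Hom p p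
  comp : ∀ {p q r : Obj}, Hom p q → Hom q r → Hom p r
  id_comp : ∀ {p q : Obj} (f : Hom p q), comp (id p) f = f
  comp_id : ∀ {p q : Obj} (f : Hom p q), comp f (id q) = f
  assoc : ∀ {p q r s : Obj} (f : Hom p q) (g : Hom q r) (h : Hom r s),
    comp (comp f g) h = comp f (comp g h)
  rank : Obj → ℕ
  level : ℕ → Finset Obj
  zero : Obj

namespace UpdownData

/-- Axioms A1–A5 of an updown category. -/
structure IsUpdownCat (C : UpdownData) : Prop where
  /-- `level n` is exactly the (finite) set of objects of rank `n` (A1). -/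
  mem_level : ∀ (n : ℕ) (p : C.Obj), p ∈ C.level n ↔ C.rank p = n
  /-- A2: `zero` is the unique rank-0 object. -/
  rank_zero : C.rank C.zero = 0
  zero_unique : ∀ p : C.Obj, C.rank p = 0 → p = C.zero
  /-- A2: there is a morphism from `zero` to every object. -/
  zero_init : ∀ p : C.Obj, Nonempty (C.Hom C.zero p)
  /-- A3: hom-sets are finite. -/
  homFinite : ∀ p q : C.Obj, Finite (C.Hom p q)
  /-- A3: `Hom p q` is empty unless `rank p < rank q` or `p = q`. -/
  hom_rank : ∀ p q : C.Obj, C.Hom p q → (C.rank p < C.rank q ∨ p = q)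
  /-- A3: every endomorphism is invertible, so `Hom p p = Aut p` is a group. -/
  aut_group : ∀ (p : C.Obj) (f : C.Hom p p),
    ∃ g : C.Hom p p, C.comp f g = C.id p ∧ C.comp g f = C.id p
  /-- A4: every morphism raising rank by more than one factors through the
  next level (hence, inductively, through all intermediate levels). -/
  factor : ∀ (p q : C.Obj) (f : C.Hom p q), C.rank p + 1 < C.rank q →
    ∃ (r : C.Obj) (g : C.Hom p r) (h : C.Hom r q),
      C.rank r = C.rank p + 1 ∧ C.comp g h = f
  /-- A5: `Aut p` acts freely on `Hom p q` by precomposition when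
  `rank q = rank p + 1`. -/
  free_pre : ∀ (p q : C.Obj), C.rank q = C.rank p + 1 →
    ∀ (α : C.Hom p p) (f : C.Hom p q), C.comp α f = f → α = C.id p
  /-- A5: `Aut q` acts freely on `Hom p q` by postcomposition when
  `rank q = rank p + 1`. -/
  free_post : ∀ (p q : C.Obj), C.rank q = C.rank p + 1 →
    ∀ (β : C.Hom q q) (f : C.Hom p q), C.comp f β = f → β = C.id q

/-- An updown category is unilateral if all automorphism groups are trivial. -/
def Unilateral (C : UpdownData) : Prop :=
  ∀ (p : C.Obj) (f : C.Hom p p), f = C.id p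

/-- An updown category is simple if there is at most one morphism between any
two objects and morphisms factor uniquely into rank-1 steps (so the object at
each intermediate rank in a factorization is unique). -/
def SimpleUD (C : UpdownData) : Prop :=
  (∀ p q : C.Obj, Subsingleton (C.Hom p q)) ∧
  (∀ (p q : C.Obj) (f : C.Hom p q) (k : ℕ), C.rank p < k → k < C.rank q →
    ∃! r : C.Obj, C.rank r = k ∧
      ∃ (g : C.Hom p r) (h : C.Hom r q), C.comp g h = f)

end UpdownData

/-! The product of updown categories. -/

namespace UpdownData

open Classical in
/-- The product of two updown data: objects are pairs, hom-sets are products of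
hom-sets, and the rank is the sum of the ranks. -/
noncomputable def prod (C D : UpdownData) : UpdownData where
  Obj := C.Obj × D.Obj
  Hom p q := C.Hom p.1 q.1 × D.Hom p.2 q.2
  id p := (C.id p.1, D.id p.2)
  comp f g := (C.comp f.1 g.1, D.comp f.2 g.2)
  id_comp f := by cases f; simp [C.id_comp, D.id_comp]
  comp_id f := by cases f; simp [C.comp_id, D.comp_id]
  assoc f g h := by simp [C.assoc, D.assoc]
  rank p := C.rank p.1 + D.rank p.2
  level n := (Finset.range (n + 1)).biUnion fun i => C.level i ×ˢ D.level (n - i)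
  zero := (C.zero, D.zero)

end UpdownData

/-! Every axiom is checked coordinatewise, using that morphisms never lower the rank. For A4, a
morphism of the product is factored in a coordinate where it raises the rank. For A5, a morphism
raising the total rank by one is an endomorphism `f` in one coordinate and a cover in the other:
freeness comes from the cover, while `comp α f = f → α = id` holds because `f` is invertible (A3). -/

namespace UpdownData.IsUpdownCat

variable {C D : UpdownData}

theorem eq_id_of_comp_eq_self (hC : C.IsUpdownCat) {p : C.Obj} {α f : C.Hom p p}
    (h : C.comp α f = f) : α = C.id p := by
  obtain ⟨g, hfg, -⟩ := hC.aut_group p f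
  calc α = C.comp (C.comp α f) g := by rw [C.assoc, hfg, C.comp_id]
    _ = C.id p := by rw [h, hfg]

theorem eq_id_of_comp_self_eq (hC : C.IsUpdownCat) {p : C.Obj} {β f : C.Hom p p}
    (h : C.comp f β = f) : β = C.id p := by
  obtain ⟨g, -, hgf⟩ := hC.aut_group p f
  calc β = C.comp g (C.comp f β) := by rw [← C.assoc, hgf, C.id_comp]
    _ = C.id p := by rw [h, hgf]

theorem exists_factor_of_rank_lt (hC : C.IsUpdownCat) {p q : C.Obj} (f : C.Hom p q)
    (h : C.rank p < C.rank q) : ∃ (r : C.Obj) (g : C.Hom p r) (k : C.Hom r q),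
      C.rank r = C.rank p + 1 ∧ C.comp g k = f := by
  rcases (Nat.succ_le_of_lt h).lt_or_eq with h | h
  · exact hC.factor p q f h
  · exact ⟨q, f, C.id q, h.symm, C.comp_id f⟩

theorem mem_biUnion_level_prod_iff (hC : C.IsUpdownCat) (hD : D.IsUpdownCat)
    [DecidableEq (C.Obj × D.Obj)] (n : ℕ) (p : C.Obj × D.Obj) :
    p ∈ (Finset.range (n + 1)).biUnion (fun i => C.level i ×ˢ D.level (n - i)) ↔
      C.rank p.1 + D.rank p.2 = n := by
  simp only [Finset.mem_biUnion, Finset.mem_range, Finset.mem_product, hC.mem_level,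
    hD.mem_level]
  exact ⟨by omega, fun h => ⟨C.rank p.1, by omega, rfl, by omega⟩⟩

section Components

variable {p₁ q₁ : C.Obj} {p₂ q₂ : D.Obj}

theorem prod_hom_rank (hC : C.IsUpdownCat) (hD : D.IsUpdownCat) (f₁ : C.Hom p₁ q₁)
    (f₂ : D.Hom p₂ q₂) :
    C.rank p₁ + D.rank p₂ < C.rank q₁ + D.rank q₂ ∨ (p₁, p₂) = (q₁, q₂) := by
  rcases hC.hom_rank p₁ q₁ f₁ with h₁ | rfl <;> rcases hD.hom_rank p₂ q₂ f₂ with h₂ | rfl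
  · exact Or.inl (by omega)
  · exact Or.inl (by omega)
  · exact Or.inl (by omega)
  · exact Or.inr rfl

theorem prod_aut_group (hC : C.IsUpdownCat) (hD : D.IsUpdownCat) (f₁ : C.Hom p₁ p₁)
    (f₂ : D.Hom p₂ p₂) :
    ∃ g : C.Hom p₁ p₁ × D.Hom p₂ p₂,
      (C.comp f₁ g.1, D.comp f₂ g.2) = (C.id p₁, D.id p₂) ∧
        (C.comp g.1 f₁, D.comp g.2 f₂) = (C.id p₁, D.id p₂) := by
  obtain ⟨g₁, hfg₁, hgf₁⟩ := hC.aut_group p₁ f₁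
  obtain ⟨g₂, hfg₂, hgf₂⟩ := hD.aut_group p₂ f₂
  exact ⟨(g₁, g₂), Prod.ext hfg₁ hfg₂, Prod.ext hgf₁ hgf₂⟩

theorem prod_factor (hC : C.IsUpdownCat) (hD : D.IsUpdownCat) (f₁ : C.Hom p₁ q₁)
    (f₂ : D.Hom p₂ q₂) (h : C.rank p₁ + D.rank p₂ + 1 < C.rank q₁ + D.rank q₂) :
    ∃ (r : C.Obj × D.Obj) (g : C.Hom p₁ r.1 × D.Hom p₂ r.2) (k : C.Hom r.1 q₁ × D.Hom r.2 q₂),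
      C.rank r.1 + D.rank r.2 = C.rank p₁ + D.rank p₂ + 1 ∧
        (C.comp g.1 k.1, D.comp g.2 k.2) = (f₁, f₂) := by
  rcases hC.hom_rank p₁ q₁ f₁ with h₁ | rfl
  · obtain ⟨r₁, g₁, k₁, hr₁, rfl⟩ := hC.exists_factor_of_rank_lt f₁ h₁
    exact ⟨(r₁, p₂), (g₁, D.id p₂), (k₁, f₂), by simp only [hr₁]; omega, by rw [D.id_comp]⟩
  · obtain ⟨r₂, g₂, k₂, hr₂, rfl⟩ := hD.exists_factor_of_rank_lt f₂ (by omega)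
    exact ⟨(p₁, r₂), (C.id p₁, g₂), (f₁, k₂), by simp only [hr₂]; omega, by rw [C.id_comp]⟩

theorem prod_rank_succ_cases (hC : C.IsUpdownCat) (hD : D.IsUpdownCat) (f₁ : C.Hom p₁ q₁)
    (f₂ : D.Hom p₂ q₂) (h : C.rank q₁ + D.rank q₂ = C.rank p₁ + D.rank p₂ + 1) :
    (C.rank q₁ = C.rank p₁ + 1 ∧ p₂ = q₂) ∨ (p₁ = q₁ ∧ D.rank q₂ = D.rank p₂ + 1) := by
  rcases hC.hom_rank p₁ q₁ f₁ with h₁ | rfl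
  · rcases hD.hom_rank p₂ q₂ f₂ with h₂ | rfl
    · omega
    · exact Or.inl ⟨by omega, rfl⟩
  · exact Or.inr ⟨rfl, by omega⟩

theorem prod_free_pre (hC : C.IsUpdownCat) (hD : D.IsUpdownCat) {f₁ : C.Hom p₁ q₁}
    {f₂ : D.Hom p₂ q₂} (h : C.rank q₁ + D.rank q₂ = C.rank p₁ + D.rank p₂ + 1)
    {α₁ : C.Hom p₁ p₁} {α₂ : D.Hom p₂ p₂} (h₁ : C.comp α₁ f₁ = f₁) (h₂ : D.comp α₂ f₂ = f₂) :
    (α₁, α₂) = (C.id p₁, D.id p₂) := by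
  rcases hC.prod_rank_succ_cases hD f₁ f₂ h with ⟨hq₁, rfl⟩ | ⟨rfl, hq₂⟩
  · exact Prod.ext (hC.free_pre p₁ q₁ hq₁ α₁ f₁ h₁) (hD.eq_id_of_comp_eq_self h₂)
  · exact Prod.ext (hC.eq_id_of_comp_eq_self h₁) (hD.free_pre p₂ q₂ hq₂ α₂ f₂ h₂)

theorem prod_free_post (hC : C.IsUpdownCat) (hD : D.IsUpdownCat) {f₁ : C.Hom p₁ q₁}
    {f₂ : D.Hom p₂ q₂} (h : C.rank q₁ + D.rank q₂ = C.rank p₁ + D.rank p₂ + 1)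
    {β₁ : C.Hom q₁ q₁} {β₂ : D.Hom q₂ q₂} (h₁ : C.comp f₁ β₁ = f₁) (h₂ : D.comp f₂ β₂ = f₂) :
    (β₁, β₂) = (C.id q₁, D.id q₂) := by
  rcases hC.prod_rank_succ_cases hD f₁ f₂ h with ⟨hq₁, rfl⟩ | ⟨rfl, hq₂⟩
  · exact Prod.ext (hC.free_post p₁ q₁ hq₁ β₁ f₁ h₁) (hD.eq_id_of_comp_self_eq h₂)
  · exact Prod.ext (hC.eq_id_of_comp_self_eq h₁) (hD.free_post p₂ q₂ hq₂ β₂ f₂ h₂)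

end Components

end UpdownData.IsUpdownCat

open UpdownData in
/-- the product of two updown categories is an updown category. -/
theorem updown_prod_isUpdownCat (C D : UpdownData)
    (hC : C.IsUpdownCat) (hD : D.IsUpdownCat) :
    (UpdownData.prod C D).IsUpdownCat := by
  exact
    { mem_level := fun n p => by
        classical exact hC.mem_biUnion_level_prod_iff hD n p
      rank_zero := Nat.add_eq_zero_iff.2 ⟨hC.rank_zero, hD.rank_zero⟩
      zero_unique := fun p hp => Prod.ext (hC.zero_unique p.1 (Nat.add_eq_zero_iff.1 hp).1)
        (hD.zero_unique p.2 (Nat.add_eq_zero_iff.1 hp).2)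
      zero_init := fun p => Nonempty.map2 Prod.mk (hC.zero_init p.1) (hD.zero_init p.2)
      homFinite := fun p q => @Finite.instProd _ _ (hC.homFinite p.1 q.1) (hD.homFinite p.2 q.2)
      hom_rank := fun p q f => hC.prod_hom_rank hD f.1 f.2
      factor := fun p q f h => hC.prod_factor hD f.1 f.2 h
      aut_group := fun p f => hC.prod_aut_group hD f.1 f.2
      free_pre := fun p q h α f hα =>
        hC.prod_free_pre hD h (congrArg Prod.fst hα) (congrArg Prod.snd hα)
      free_post := fun p q h β f hβ =>
        hC.prod_free_post hD h (congrArg Prod.fst hβ) (congrArg Prod.snd hβ) }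
end

section
/- Let F : C → D be a morphism of updown categories. If D is unilateral (all automorphism groups trivial), then so is C. If D is simple (at most one morphism between any two objects and unique factorization of morphisms into rank-1 steps), then C is also simple and F is injective on object sets. -/
/-! Functors between updown data, covering maps, morphisms of unilateral
updown categories. -/

namespace UpdownData

/-- A rank-preserving functor between updown data. -/
structure UDFunctor (C D : UpdownData) where
  obj : C.Obj → D.Obj
  map : ∀ {p q : C.Obj}, C.Hom p q → D.Hom (obj p) (obj q)
  rank_eq : ∀ p : C.Obj, D.rank (obj p) = C.rank p
  map_id : ∀ p : C.Obj, map (C.id p) = D.id (obj p)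
  map_comp : ∀ {p q r : C.Obj} (f : C.Hom p q) (g : C.Hom q r),
    map (C.comp f g) = D.comp (map f) (map g)

/-- Composition of functors (diagrammatic order). -/
def UDFunctor.comp {A B C : UpdownData} (F : UDFunctor A B) (G : UDFunctor B C) :
    UDFunctor A C where
  obj p := G.obj (F.obj p)
  map f := G.map (F.map f)
  rank_eq p := (G.rank_eq _).trans (F.rank_eq p)
  map_id p := by show G.map (F.map (A.id p)) = _; rw [F.map_id, G.map_id]
  map_comp f g := by show G.map (F.map (A.comp f g)) = _; rw [F.map_comp, G.map_comp]

/-- For `p, q` in `C`, the induced function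
`⊔_{q' : F(q') = F(q)} Hom(p,q') → Hom(F(p),F(q))`. -/
def inducedMap {C D : UpdownData} (F : UDFunctor C D) (p q : C.Obj) :
    (Σ q' : {q' : C.Obj // F.obj q' = F.obj q}, C.Hom p q'.1) →
      D.Hom (F.obj p) (F.obj q) :=
  fun x => cast (congrArg (fun y => D.Hom (F.obj p) y) x.1.2) (F.map x.2)

/-- A morphism of unilateral updown categories: the induced function on
disjoint unions of hom-sets between adjacent ranks is injective. -/
def IsUUMorphism {C D : UpdownData} (F : UDFunctor C D) : Prop :=
  ∀ p q : C.Obj, C.rank q = C.rank p + 1 → Function.Injective (inducedMap F p q)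

/-- A covering map of unilateral updown categories: surjective on objects, and
the induced function on disjoint unions of hom-sets between adjacent ranks is
bijective. -/
def IsCovering {C D : UpdownData} (F : UDFunctor C D) : Prop :=
  Function.Surjective F.obj ∧
  ∀ p q : C.Obj, C.rank q = C.rank p + 1 → Function.Bijective (inducedMap F p q)

end UpdownData

/-! Quotients of hom-sets by automorphism actions, and morphisms of updown
categories (Definition 2.4). -/

namespace UpdownData

/-- `Hom(p,q)/Aut(p)`: the quotient of `Hom p q` by the precomposition action
of `Aut(p) = Hom p p`. -/
def HomModSrc (C : UpdownData) (p q : C.Obj) : Type :=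
  Quot (fun f g : C.Hom p q => ∃ α : C.Hom p p, g = C.comp α f)

/-- `Hom(p,q)/Aut(q)`: the quotient of `Hom p q` by the postcomposition action
of `Aut(q) = Hom q q`. -/
def HomModTrg (C : UpdownData) (p q : C.Obj) : Type :=
  Quot (fun f g : C.Hom p q => ∃ β : C.Hom q q, g = C.comp f β)

variable {C D : UpdownData}

/-- A functor descends to quotients by source automorphisms. -/
def pushSrc (F : UDFunctor C D) (p q : C.Obj) :
    HomModSrc C p q → HomModSrc D (F.obj p) (F.obj q) :=
  Quot.lift (fun f => Quot.mk _ (F.map f)) (by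
    rintro f g ⟨α, hg⟩
    exact Quot.sound ⟨F.map α, by rw [hg, F.map_comp]⟩)

/-- A functor descends to quotients by target automorphisms. -/
def pushTrg (F : UDFunctor C D) (p q : C.Obj) :
    HomModTrg C p q → HomModTrg D (F.obj p) (F.obj q) :=
  Quot.lift (fun f => Quot.mk _ (F.map f)) (by
    rintro f g ⟨β, hg⟩
    exact Quot.sound ⟨F.map β, by rw [hg, F.map_comp]⟩)

/-- Definition 2.4: a morphism of updown categories is a rank-preserving
functor `F` such that `Aut(p) → Aut(F p)` is injective and, for
`|q| = |p| + 1`, the induced maps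
`⊔_{F(q')=F(q)} Hom(p,q')/Aut(p) → Hom(F p, F q)/Aut(F p)` and
`⊔_{F(q')=F(q)} Hom(p,q')/Aut(q') → Hom(F p, F q)/Aut(F q)` are injective. -/
def IsUDMorphism (F : UDFunctor C D) : Prop :=
  (∀ p : C.Obj, Function.Injective fun α : C.Hom p p => F.map α) ∧
  (∀ p q : C.Obj, C.rank q = C.rank p + 1 →
    Function.Injective
      (fun x : Σ q' : {q' : C.Obj // F.obj q' = F.obj q}, HomModSrc C p q'.1 =>
        cast (congrArg (fun y => HomModSrc D (F.obj p) y) x.1.2)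
          (pushSrc F p x.1.1 x.2))) ∧
  (∀ p q : C.Obj, C.rank q = C.rank p + 1 →
    Function.Injective
      (fun x : Σ q' : {q' : C.Obj // F.obj q' = F.obj q}, HomModTrg C p q'.1 =>
        cast (congrArg (fun y => HomModTrg D (F.obj p) y) x.1.2)
          (pushTrg F p x.1.1 x.2)))

end UpdownData

namespace UpdownAux
open UpdownData

private lemma quotSub {α : Type} (h : ∀ a b : α, a = b) (r : α → α → Prop)
    (x y : Quot r) : x = y := by
  induction x using Quot.ind with | _ a =>
  induction y using Quot.ind with | _ b =>
  exact congrArg (Quot.mk r) (h a b)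

variable {C D : UpdownData} {F : UDFunctor C D}

private lemma srcSub (hD : ∀ a b : D.Obj, ∀ f g : D.Hom a b, f = g)
    (a b : D.Obj) (x y : HomModSrc D a b) : x = y :=
  quotSub (hD a b) _ x y

private lemma objEq (hF : IsUDMorphism F)
    (hD : ∀ a b : D.Obj, ∀ f g : D.Hom a b, f = g)
    {p q1 q2 : C.Obj} (hr1 : C.rank q1 = C.rank p + 1)
    (hE : F.obj q2 = F.obj q1)
    (g1 : C.Hom p q1) (g2 : C.Hom p q2) : q1 = q2 := by
  have key := hF.2.1 p q1 hr1 (a₁ := ⟨⟨q1, rfl⟩, Quot.mk _ g1⟩)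
    (a₂ := ⟨⟨q2, hE⟩, Quot.mk _ g2⟩) (srcSub hD _ _ _ _)
  exact congrArg (fun x => x.1.1) key

private lemma adjEq (hF : IsUDMorphism F)
    (hD : ∀ a b : D.Obj, ∀ f g : D.Hom a b, f = g)
    (hCuni : Unilateral C)
    {p q : C.Obj} (hr : C.rank q = C.rank p + 1)
    (f g : C.Hom p q) : f = g := by
  have key := hF.2.1 p q hr (a₁ := ⟨⟨q, rfl⟩, Quot.mk _ f⟩)
    (a₂ := ⟨⟨q, rfl⟩, Quot.mk _ g⟩) (srcSub hD _ _ _ _)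
  injection key with h1 h2
  have h2' : (Quot.mk _ f : HomModSrc C p q) = Quot.mk _ g := h2
  have := congrArg (Quot.lift (fun x : C.Hom p q => x)
    (fun a b hab => by obtain ⟨α, hb⟩ := hab; rw [hb, hCuni p α, C.id_comp])) h2'
  simpa using this

private lemma existsFactor (hC : C.IsUpdownCat) :
    ∀ (m : ℕ) (p q : C.Obj) (f : C.Hom p q) (k : ℕ), k = C.rank p + m →
    k ≤ C.rank q →
    ∃ r, ∃ (g : C.Hom p r) (h : C.Hom r q), C.rank r = k ∧ C.comp g h = f := by
  intro m
  induction m with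
  | zero => intro p q f k hk _; exact ⟨p, C.id p, f, by omega, C.id_comp f⟩
  | succ n ih =>
    intro p q f k hk hkq
    obtain ⟨r, g, h, hr, hgh⟩ := ih p q f (C.rank p + n) rfl (by omega)
    by_cases hq : C.rank q = C.rank p + n + 1
    · exact ⟨q, C.comp g h, C.id q, by omega, by rw [C.comp_id]; exact hgh⟩
    · have hlt : C.rank r + 1 < C.rank q := by omega
      obtain ⟨s, u, v, hs, huv⟩ := hC.factor r q h hlt
      exact ⟨s, C.comp g u, v, by omega, by rw [C.assoc, huv, hgh]⟩

private lemma objInj (hC : C.IsUpdownCat) (hD : D.IsUpdownCat)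
    (hF : IsUDMorphism F) (hDs : SimpleUD D)
    (hDsub : ∀ a b : D.Obj, ∀ f g : D.Hom a b, f = g) :
    ∀ (n : ℕ) (q1 q2 : C.Obj), C.rank q1 = n → C.rank q2 = n →
      F.obj q1 = F.obj q2 → q1 = q2 := by
  intro n
  induction n with
  | zero => intro q1 q2 h1 h2 _; rw [hC.zero_unique q1 h1, hC.zero_unique q2 h2]
  | succ n ih =>
    intro q1 q2 h1 h2 hE
    obtain ⟨f1⟩ := hC.zero_init q1
    obtain ⟨f2⟩ := hC.zero_init q2
    obtain ⟨p1, g1, h1', hp1, -⟩ := existsFactor hC n C.zero q1 f1 n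
      (by rw [hC.rank_zero]; omega) (by omega)
    obtain ⟨p2, g2, h2', hp2, -⟩ := existsFactor hC n C.zero q2 f2 n
      (by rw [hC.rank_zero]; omega) (by omega)
    have hFp : F.obj p1 = F.obj p2 := by
      rcases Nat.eq_zero_or_pos n with hn | hn
      · rw [hC.zero_unique p1 (by omega), hC.zero_unique p2 (by omega)]
      · obtain ⟨z1⟩ := hD.zero_init (F.obj p1)
        obtain ⟨z2⟩ := hD.zero_init (F.obj p2)
        obtain ⟨r, hrprop, hrun⟩ := hDs.2 D.zero (F.obj q1) (D.comp z1 (F.map h1')) n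
          (by rw [hD.rank_zero]; exact hn) (by rw [F.rank_eq, h1]; omega)
        have e1 : F.obj p1 = r := hrun _ ⟨by rw [F.rank_eq, hp1], z1, F.map h1', rfl⟩
        have e2 : F.obj p2 = r := hrun _ ⟨by rw [F.rank_eq, hp2], z2,
          hE ▸ F.map h2', hDsub _ _ _ _⟩
        rw [e1, e2]
    have hp12 := ih p1 p2 hp1 hp2 hFp
    subst hp12
    exact objEq hF hDsub (by omega) hE.symm h1' h2'

private lemma homSub (hC : C.IsUpdownCat)
    (hF : IsUDMorphism F) (hDs : SimpleUD D)
    (hDsub : ∀ a b : D.Obj, ∀ f g : D.Hom a b, f = g)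
    (hCuni : Unilateral C) :
    ∀ (d : ℕ) (p q : C.Obj), C.rank q ≤ C.rank p + d →
      ∀ f g : C.Hom p q, f = g := by
  intro d
  induction d with
  | zero =>
    intro p q hle f g
    rcases hC.hom_rank p q f with h | h
    · omega
    · subst h; rw [hCuni p f, hCuni p g]
  | succ n ih =>
    intro p q hle f g
    by_cases hq : C.rank q ≤ C.rank p + n
    · exact ih p q hq f g
    · have hq' : C.rank q = C.rank p + n + 1 := by omega
      cases n with
      | zero => exact adjEq hF hDsub hCuni (by omega) f g
      | succ m =>
        obtain ⟨r1, f1, f2, hr1, hf⟩ := hC.factor p q f (by omega)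
        obtain ⟨r2, g1, g2, hr2, hg⟩ := hC.factor p q g (by omega)
        have hFr : F.obj r2 = F.obj r1 := by
          obtain ⟨r, -, hun⟩ := hDs.2 (F.obj p) (F.obj q) (F.map f) (C.rank p + 1)
            (by rw [F.rank_eq]; omega) (by rw [F.rank_eq]; omega)
          have e1 : F.obj r1 = r := hun _ ⟨by rw [F.rank_eq, hr1], F.map f1, F.map f2,
            by rw [← F.map_comp, hf]⟩
          have e2 : F.obj r2 = r := hun _ ⟨by rw [F.rank_eq, hr2], F.map g1, F.map g2,
            by rw [← F.map_comp, hg]; exact hDsub _ _ _ _⟩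
          rw [e1, e2]
        have hr12 : r1 = r2 := objEq hF hDsub (p := p) (by omega) hFr f1 g1
        subst hr12
        have e1 := adjEq hF hDsub hCuni (q := r1) (by omega) f1 g1
        have e2 := ih r1 q (by omega) f2 g2
        rw [← hf, ← hg, e1, e2]

private lemma factUnique (hC : C.IsUpdownCat)
    (hF : IsUDMorphism F) (hDs : SimpleUD D)
    (hDsub : ∀ a b : D.Obj, ∀ f g : D.Hom a b, f = g)
    (hCsub : ∀ (p q : C.Obj) (f g : C.Hom p q), f = g) :
    ∀ (m : ℕ) (p q : C.Obj) (f : C.Hom p q) (k : ℕ), k = C.rank p + 1 + m →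
      k < C.rank q →
      ∀ r1 r2 : C.Obj, C.rank r1 = k → C.rank r2 = k →
      (∃ (g : C.Hom p r1) (h : C.Hom r1 q), C.comp g h = f) →
      (∃ (g : C.Hom p r2) (h : C.Hom r2 q), C.comp g h = f) →
      r1 = r2 := by
  intro m
  induction m with
  | zero =>
    rintro p q f k hk hkq r1 r2 hk1 hk2 ⟨g1, h1', hc1⟩ ⟨g2, h2', hc2⟩
    have hFr : F.obj r2 = F.obj r1 := by
      obtain ⟨r, -, hun⟩ := hDs.2 (F.obj p) (F.obj q) (F.map f) k
        (by rw [F.rank_eq]; omega) (by rw [F.rank_eq]; omega)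
      have e1 : F.obj r1 = r := hun _ ⟨by rw [F.rank_eq, hk1], F.map g1, F.map h1',
        by rw [← F.map_comp, hc1]⟩
      have e2 : F.obj r2 = r := hun _ ⟨by rw [F.rank_eq, hk2], F.map g2, F.map h2',
        by rw [← F.map_comp, hc2]⟩
      rw [e1, e2]
    exact objEq hF hDsub (by omega) hFr g1 g2
  | succ n ih =>
    rintro p q f k hk hkq r1 r2 hk1 hk2 ⟨g1, h1', hc1⟩ ⟨g2, h2', hc2⟩
    obtain ⟨s1, a1, b1, hs1, hab1⟩ := hC.factor p r1 g1 (by omega)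
    obtain ⟨s2, a2, b2, hs2, hab2⟩ := hC.factor p r2 g2 (by omega)
    have hFs : F.obj s2 = F.obj s1 := by
      obtain ⟨s, -, hun⟩ := hDs.2 (F.obj p) (F.obj q) (F.map f) (C.rank p + 1)
        (by rw [F.rank_eq]; omega) (by rw [F.rank_eq]; omega)
      have e1 : F.obj s1 = s := hun _ ⟨by rw [F.rank_eq, hs1], F.map a1,
        D.comp (F.map b1) (F.map h1'),
        by rw [← D.assoc, ← F.map_comp, ← F.map_comp, hab1, hc1]⟩
      have e2 : F.obj s2 = s := hun _ ⟨by rw [F.rank_eq, hs2], F.map a2,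
        D.comp (F.map b2) (F.map h2'),
        by rw [← D.assoc, ← F.map_comp, ← F.map_comp, hab2, hc2]⟩
      rw [e1, e2]
    have hs12 : s1 = s2 := objEq hF hDsub (by omega) hFs a1 a2
    subst hs12
    exact ih s1 q (C.comp b1 h1') k (by omega) hkq r1 r2 hk1 hk2
      ⟨b1, h1', rfl⟩ ⟨b2, h2', hCsub _ _ _ _⟩

end UpdownAux


open UpdownData in
/-- if `F : C → D` is a morphism of updown categories and `D` is
unilateral then so is `C`; if `D` is simple then `C` is simple and `F` is
injective on objects. -/
theorem updown_morphism_unilateral_simple (C D : UpdownData)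
    (hC : C.IsUpdownCat) (hD : D.IsUpdownCat)
    (F : UDFunctor C D) (hF : IsUDMorphism F) :
    (Unilateral D → Unilateral C) ∧
    (SimpleUD D → SimpleUD C ∧ Function.Injective F.obj) := by
  constructor
  · intro hDu p f
    apply hF.1 p
    show F.map f = F.map (C.id p)
    rw [F.map_id]
    exact hDu _ _
  · intro hDs
    have hDsub : ∀ a b : D.Obj, ∀ f g : D.Hom a b, f = g :=
      fun a b f g => (hDs.1 a b).allEq f g
    have hCuni : Unilateral C := by
      intro p f
      apply hF.1 p
      show F.map f = F.map (C.id p)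
      exact hDsub _ _ _ _
    have hCsub : ∀ (p q : C.Obj) (f g : C.Hom p q), f = g := fun p q f g =>
      UpdownAux.homSub hC hF hDs hDsub hCuni (C.rank q) p q (by omega) f g
    refine ⟨⟨fun p q => ⟨hCsub p q⟩, ?_⟩, ?_⟩
    · intro p q f k h1 h2
      obtain ⟨r, g, h, hr, hgh⟩ := UpdownAux.existsFactor hC (k - C.rank p) p q f k
        (by omega) (by omega)
      refine ⟨r, ⟨hr, g, h, hgh⟩, ?_⟩
      rintro r' ⟨hr', g', h', hgh'⟩
      exact UpdownAux.factUnique hC hF hDs hDsub hCsub (k - C.rank p - 1) p q f k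
        (by omega) h2 r' r hr' hr ⟨g', h', hgh'⟩ ⟨g, h, hgh⟩
    · intro q1 q2 hE
      have hrk : C.rank q2 = C.rank q1 := by
        rw [← F.rank_eq, ← F.rank_eq, hE]
      exact UpdownAux.objInj hC hD hF hDs hDsub (C.rank q1) q1 q2 rfl hrk hE
end

section
/- Let C be an updown category, k a field of characteristic 0, and define linear operators U, D on the free vector space k(Ob C) by U(p) = Σ_{|p'|=|p|+1} u(p;p')·p' and D(p) = Σ_{|p'|=|p|-1} d(p';p)·p' (with D(0̂) = 0). Then U and D are adjoint with respect to the inner product ⟨p, p'⟩ = |Aut(p)| if p = p' and 0 otherwise; that is, ⟨U(x), y⟩ = ⟨x, D(y)⟩ for all x, y. -/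
/-! Up and down operators on the free vector space `Obj →₀ ℚ`. -/

namespace UpdownData

variable (C : UpdownData)

/-- `u(p;p') = |Hom(p,p')|/|Aut(p')|` (as a rational number). -/
noncomputable def uQ (p q : C.Obj) : ℚ :=
  (Nat.card (C.Hom p q) : ℚ) / (Nat.card (C.Hom q q) : ℚ)

/-- `d(p;p') = |Hom(p,p')|/|Aut(p)|` (as a rational number). -/
noncomputable def dQ (p q : C.Obj) : ℚ :=
  (Nat.card (C.Hom p q) : ℚ) / (Nat.card (C.Hom p p) : ℚ)

/-- The free `ℚ`-vector space on the objects of `C`. -/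
abbrev Vec := C.Obj →₀ ℚ

/-- `U(p) = Σ_{|p'| = |p|+1} u(p;p')·p'`. -/
noncomputable def Uvec (p : C.Obj) : C.Vec :=
  ∑ q ∈ C.level (C.rank p + 1), C.uQ p q • Finsupp.single q 1

/-- `D(p) = Σ_{|p''| = |p|-1} d(p'';p)·p''`, and `D(0̂) = 0`. -/
noncomputable def Dvec (p : C.Obj) : C.Vec :=
  if C.rank p = 0 then 0
  else ∑ q ∈ C.level (C.rank p - 1), C.dQ q p • Finsupp.single q 1

/-- The up operator. -/
noncomputable def Uop : C.Vec →ₗ[ℚ] C.Vec :=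
  Finsupp.lsum ℚ fun p => LinearMap.toSpanSingleton ℚ C.Vec (C.Uvec p)

/-- The down operator. -/
noncomputable def Dop : C.Vec →ₗ[ℚ] C.Vec :=
  Finsupp.lsum ℚ fun p => LinearMap.toSpanSingleton ℚ C.Vec (C.Dvec p)

/-- The inner product with `⟨p,p⟩ = |Aut(p)|` on basis elements. -/
noncomputable def innerUD (x y : C.Vec) : ℚ :=
  x.sum fun p c => c * y p * (Nat.card (C.Hom p p) : ℚ)

/-- The commutator `DU - UD`. -/
noncomputable def commDU : C.Vec →ₗ[ℚ] C.Vec :=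
  C.Dop ∘ₗ C.Uop - C.Uop ∘ₗ C.Dop

/-- Extended multiplicity `u(p;q)`: the coefficient of `q` in
`U^{|q|-|p|}(p)`, i.e. `⟨U^{|q|-|p|}(p), q⟩ / |Aut q|`. -/
noncomputable def uext (p q : C.Obj) : ℚ :=
  ((C.Uop ^ (C.rank q - C.rank p)) (Finsupp.single p 1)) q

/-- Extended multiplicity `d(p;q)`: the coefficient of `p` in
`D^{|q|-|p|}(q)`. -/
noncomputable def dext (p q : C.Obj) : ℚ :=
  ((C.Dop ^ (C.rank q - C.rank p)) (Finsupp.single q 1)) p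

/-- The weak commutation condition with eigenvalue function `ε`:
every object is an eigenvector of `DU - UD`. -/
def WCC (ε : C.Obj → ℚ) : Prop :=
  ∀ p : C.Obj, C.commDU (Finsupp.single p 1) = ε p • Finsupp.single p 1

/-- The sequential commutation condition: `DU - UD` acts as the scalar `r i`
on rank `i`. -/
def SCC (r : ℕ → ℚ) : Prop :=
  ∀ p : C.Obj, C.commDU (Finsupp.single p 1) = r (C.rank p) • Finsupp.single p 1

end UpdownData

/-! Both sides of the adjunction are bilinear in `(x, y)`, so it suffices to compare them on
basis vectors `p, q`. There `⟨U p, q⟩ = u(p;q) |Aut q|` and `⟨p, D q⟩ = d(p;q) |Aut p|` when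
`|q| = |p| + 1`, and both vanish otherwise; the two products are `|Hom(p,q)|`. -/

theorem Finsupp.finset_sum_smul_single_one_apply {α R : Type*} [Semiring R] [DecidableEq α]
    (s : Finset α) (f : α → R) (a : α) :
    (∑ q ∈ s, f q • Finsupp.single q (1 : R)) a = if a ∈ s then f a else 0 := by
  simp [Finsupp.finsetSum_apply, Finsupp.single_apply]

namespace UpdownData

variable {C : UpdownData}

variable (C) in
noncomputable def innerUDₗ : C.Vec →ₗ[ℚ] C.Vec →ₗ[ℚ] ℚ :=
  Finsupp.lsum ℚ fun p =>
    LinearMap.toSpanSingleton ℚ _ ((Nat.card (C.Hom p p) : ℚ) • Finsupp.lapply p)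

theorem innerUD_eq_innerUDₗ (x y : C.Vec) : C.innerUD x y = C.innerUDₗ x y := by
  simp only [innerUD, innerUDₗ, Finsupp.lsum_apply, Finsupp.sum, LinearMap.sum_apply,
    LinearMap.toSpanSingleton_apply, LinearMap.smul_apply, Finsupp.lapply_apply, smul_eq_mul]
  exact Finset.sum_congr rfl fun p _ => by ring

theorem innerUDₗ_single_left (p : C.Obj) (y : C.Vec) :
    C.innerUDₗ (Finsupp.single p 1) y = y p * Nat.card (C.Hom p p) := by
  simp [innerUDₗ, mul_comm]

theorem innerUDₗ_single_right (x : C.Vec) (q : C.Obj) :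
    C.innerUDₗ x (Finsupp.single q 1) = x q * Nat.card (C.Hom q q) := by
  classical
  simp only [innerUDₗ, Finsupp.lsum_apply, Finsupp.sum, LinearMap.sum_apply,
    LinearMap.toSpanSingleton_apply, LinearMap.smul_apply, Finsupp.lapply_apply, smul_eq_mul,
    Finsupp.single_apply, mul_ite, mul_one, mul_zero, Finset.sum_ite_eq]
  exact ite_eq_left_iff.2 fun hq => by rw [Finsupp.notMem_support_iff.1 hq, zero_mul]

theorem Uop_single_one (p : C.Obj) : C.Uop (Finsupp.single p 1) = C.Uvec p := by
  simp [Uop]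

theorem Dop_single_one (p : C.Obj) : C.Dop (Finsupp.single p 1) = C.Dvec p := by
  simp [Dop]

theorem card_aut_ne_zero (hC : C.IsUpdownCat) (p : C.Obj) :
    (Nat.card (C.Hom p p) : ℚ) ≠ 0 := by
  have := hC.homFinite p p
  have : Nonempty (C.Hom p p) := ⟨C.id p⟩
  exact_mod_cast Nat.card_pos.ne'

theorem uQ_mul_card_aut_eq_dQ_mul_card_aut (hC : C.IsUpdownCat) (p q : C.Obj) :
    C.uQ p q * Nat.card (C.Hom q q) = C.dQ p q * Nat.card (C.Hom p p) := by
  rw [uQ, dQ, div_mul_cancel₀ _ (card_aut_ne_zero hC q),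
    div_mul_cancel₀ _ (card_aut_ne_zero hC p)]

open Classical in
theorem Uvec_apply (hC : C.IsUpdownCat) (p q : C.Obj) :
    C.Uvec p q = if C.rank q = C.rank p + 1 then C.uQ p q else 0 := by
  simp only [Uvec, Finsupp.finset_sum_smul_single_one_apply, hC.mem_level]

open Classical in
theorem Dvec_apply (hC : C.IsUpdownCat) (p q : C.Obj) :
    C.Dvec q p = if C.rank q = C.rank p + 1 then C.dQ p q else 0 := by
  by_cases h0 : C.rank q = 0
  · simp [Dvec, h0]
  · simp only [Dvec, if_neg h0, Finsupp.finset_sum_smul_single_one_apply, hC.mem_level]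
    exact if_congr (by omega) rfl rfl

end UpdownData

open UpdownData in
/-- the up and down operators are adjoint with respect to the
inner product with `⟨p,p⟩ = |Aut(p)|` on basis elements. -/
theorem updown_U_D_adjoint (C : UpdownData) (hC : C.IsUpdownCat)
    (x y : C.Vec) :
    C.innerUD (C.Uop x) y = C.innerUD x (C.Dop y) := by
  suffices C.innerUDₗ ∘ₗ C.Uop = C.innerUDₗ.compl₂ C.Dop by
    simpa only [innerUD_eq_innerUDₗ, LinearMap.comp_apply, LinearMap.compl₂_apply] using
      LinearMap.congr_fun₂ this x y
  ext p q
  simp only [LinearMap.comp_apply, LinearMap.compl₂_apply, Finsupp.lsingle_apply, Uop_single_one,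
    Dop_single_one, innerUDₗ_single_left, innerUDₗ_single_right, Uvec_apply hC, Dvec_apply hC]
  split_ifs
  · exact uQ_mul_card_aut_eq_dQ_mul_card_aut hC p q
  · simp
end

section
/- Every unilateral updown category C has a universal cover: the category C̃ whose rank-n objects are strings (f₁, …, f_n) of composable morphisms between consecutive ranks starting at 0̂, with morphisms given by inclusion of initial segments, is a simple updown category, and the functor π : C̃ → C sending a string to the target of its last morphism is a covering map; moreover, for any covering map P : C' → C there is a covering map F : C̃ → C' with π = P ∘ F. -/
/-! The chains of rank-one steps starting at `0̂`, ordered by "is an initial segment of", form a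
simple updown category, and sending a chain to its endpoint is a covering: a rank-one step out of
the endpoint of `c` extends `c` in exactly one way. Given a covering `P : C' → C`, its bijectivity
on rank-one steps lifts every chain of `C` uniquely to a chain of `C'`, and `F` sends a chain to
the endpoint of its lift. No further work with chains shows that `F` is a covering: whenever
`P ∘ F` is a covering and `P` is injective on rank-one steps, `F` is a covering, since a rank-one
step out of `F a` is lifted along `P ∘ F` and the injectivity of `P` identifies the lift. -/

namespace UpdownData

section Functors

variable {A B C D : UpdownData}

theorem comp_heq {x x' y y' z z' : D.Obj} (hx : x = x') (hy : y = y') (hz : z = z')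
    {u : D.Hom x y} {u' : D.Hom x' y'} {v : D.Hom y z} {v' : D.Hom y' z'}
    (hu : u ≍ u') (hv : v ≍ v') : D.comp u v ≍ D.comp u' v' := by
  subst hx hy hz
  rw [eq_of_heq hu, eq_of_heq hv]

theorem IsUpdownCat.exists_hom_from_rank (hD : D.IsUpdownCat) {p q : D.Obj}
    (f : D.Hom p q) {k : ℕ} (hpk : D.rank p ≤ k) (hkq : k ≤ D.rank q) :
    ∃ r, D.rank r = k ∧ Nonempty (D.Hom r q) := by
  obtain ⟨d, rfl⟩ := Nat.exists_eq_add_of_le hpk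
  induction d generalizing p with
  | zero => exact ⟨p, rfl, ⟨f⟩⟩
  | succ d ih =>
    rcases (show D.rank p + 1 ≤ D.rank q by omega).eq_or_lt with hq | hq
    · exact ⟨q, by omega, ⟨D.id q⟩⟩
    · obtain ⟨r, -, h, hr, -⟩ := hD.factor p q f hq
      obtain ⟨s, hs, hsq⟩ := ih h (by omega) (by omega)
      exact ⟨s, by omega, hsq⟩

theorem IsUpdownCat.exists_hom_of_rank_eq_succ (hD : D.IsUpdownCat) {q : D.Obj} {n : ℕ}
    (hq : D.rank q = n + 1) : ∃ r, D.rank r = n ∧ Nonempty (D.Hom r q) :=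
  let ⟨f⟩ := hD.zero_init q
  hD.exists_hom_from_rank f (by rw [hD.rank_zero]; omega) (by omega)

theorem UDFunctor.obj_zero (hA : A.IsUpdownCat) (hB : B.IsUpdownCat) (F : UDFunctor A B) :
    F.obj A.zero = B.zero :=
  hB.zero_unique _ (by rw [F.rank_eq, hA.rank_zero])

theorem UDFunctor.map_heq (F : UDFunctor A B) {x y y' : A.Obj} (hy : y = y')
    {u : A.Hom x y} {u' : A.Hom x y'} (h : u ≍ u') : F.map u ≍ F.map u' := by
  subst hy
  rw [eq_of_heq h]

theorem UDFunctor.ext {F G : UDFunctor A B} (hobj : ∀ a, F.obj a = G.obj a)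
    (hmap : ∀ {a b : A.Obj} (f : A.Hom a b), F.map f ≍ G.map f) : F = G := by
  cases F with | mk Fo Fm =>
  cases G with | mk Go Gm =>
  obtain rfl : Fo = Go := funext hobj
  obtain rfl : @Fm = @Gm := by
    funext a b f
    exact eq_of_heq (hmap f)
  rfl

theorem inducedMap_heq (F : UDFunctor A B) (p q : A.Obj)
    (x : Σ q' : {q' : A.Obj // F.obj q' = F.obj q}, A.Hom p q'.1) :
    inducedMap F p q x ≍ F.map x.2 :=
  cast_heq _ _

theorem IsCovering.isUUMorphism {F : UDFunctor A B} (hF : IsCovering F) : IsUUMorphism F :=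
  fun p q hq => (hF.2 p q hq).1

theorem IsUUMorphism.lift_unique {F : UDFunctor A B} (hF : IsUUMorphism F) {p q₁ q₂ : A.Obj}
    (f₁ : A.Hom p q₁) (f₂ : A.Hom p q₂) (hq₁ : A.rank q₁ = A.rank p + 1)
    (hq : F.obj q₁ = F.obj q₂) (h : F.map f₁ ≍ F.map f₂) : q₁ = q₂ ∧ f₁ ≍ f₂ := by
  have := hF p q₁ hq₁ (a₁ := ⟨⟨q₁, rfl⟩, f₁⟩) (a₂ := ⟨⟨q₂, hq.symm⟩, f₂⟩)
    (eq_of_heq ((inducedMap_heq F p q₁ _).trans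
      (h.trans (inducedMap_heq F p q₁ ⟨⟨q₂, hq.symm⟩, f₂⟩).symm)))
  simp only [Sigma.mk.injEq, Subtype.mk.injEq] at this
  exact this

theorem IsCovering.exists_lift {F : UDFunctor A B} (hF : IsCovering F) (p : A.Obj) {t : B.Obj}
    (g : B.Hom (F.obj p) t) (ht : B.rank t = A.rank p + 1) :
    ∃ (q : A.Obj) (f : A.Hom p q), F.obj q = t ∧ F.map f ≍ g := by
  obtain ⟨q₀, rfl⟩ := hF.1 t
  obtain ⟨⟨⟨q, hq⟩, f⟩, hf⟩ := (hF.2 p q₀ (by rw [← F.rank_eq, ht])).2 g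
  exact ⟨q, f, hq, (inducedMap_heq _ _ _ _).symm.trans (heq_of_eq hf)⟩

theorem IsUUMorphism.of_comp {F : UDFunctor A B} {G : UDFunctor B C}
    (hFG : IsUUMorphism (F.comp G)) : IsUUMorphism F := by
  rintro p q hq ⟨⟨q₁, h₁⟩, f₁⟩ ⟨⟨q₂, h₂⟩, f₂⟩ h
  have hF : F.map f₁ ≍ F.map f₂ :=
    (inducedMap_heq _ _ _ _).symm.trans ((heq_of_eq h).trans (inducedMap_heq _ _ _ _))
  obtain ⟨rfl, hf⟩ := hFG.lift_unique f₁ f₂ (by rw [← F.rank_eq, h₁, F.rank_eq, hq])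
    (congrArg G.obj (h₁.trans h₂.symm)) (G.map_heq (h₁.trans h₂.symm) hF)
  rw [eq_of_heq hf]

theorem IsCovering.exists_lift_of_comp {F : UDFunctor A B} {G : UDFunctor B C}
    (hFG : IsCovering (F.comp G)) (hG : IsUUMorphism G) {a : A.Obj} {b : B.Obj}
    (h : B.Hom (F.obj a) b) (hb : B.rank b = B.rank (F.obj a) + 1) :
    ∃ (a' : A.Obj) (u : A.Hom a a'), F.obj a' = b ∧ F.map u ≍ h := by
  obtain ⟨a', u, ha', hu⟩ := hFG.exists_lift a (G.map h) (by rw [G.rank_eq, hb, F.rank_eq])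
  have hGa' : G.obj (F.obj a') = G.obj b := ha'
  obtain ⟨hb', hu'⟩ :=
    hG.lift_unique (F.map u) h (by rw [← G.rank_eq, hGa', G.rank_eq, hb]) hGa' hu
  exact ⟨a', u, hb', hu'⟩

theorem IsCovering.of_comp (hA : A.IsUpdownCat) (hB : B.IsUpdownCat) {F : UDFunctor A B}
    {G : UDFunctor B C} (hFG : IsCovering (F.comp G)) (hG : IsUUMorphism G) : IsCovering F := by
  refine ⟨?_, fun p q hq => ⟨IsUUMorphism.of_comp hFG.isUUMorphism p q hq, ?_⟩⟩
  · intro b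
    induction hn : B.rank b generalizing b with
    | zero => exact ⟨A.zero, by rw [F.obj_zero hA hB, hB.zero_unique b hn]⟩
    | succ n ih =>
      obtain ⟨b₀, hb₀, ⟨h⟩⟩ := hB.exists_hom_of_rank_eq_succ hn
      obtain ⟨a₀, rfl⟩ := ih b₀ hb₀
      obtain ⟨a, -, ha, -⟩ := hFG.exists_lift_of_comp hG h (by rw [hn, hb₀])
      exact ⟨a, ha⟩
  · intro f
    obtain ⟨q', u, hq', hu⟩ := hFG.exists_lift_of_comp hG f (by rw [F.rank_eq, F.rank_eq, hq])
    exact ⟨⟨⟨q', hq'⟩, u⟩, eq_of_heq ((inducedMap_heq _ _ _ _).trans hu)⟩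

end Functors

inductive Chain (C : UpdownData) : C.Obj → Type
  | nil : Chain C C.zero
  | cons {p q : C.Obj} (c : Chain C p) (f : C.Hom p q) (hr : C.rank q = C.rank p + 1) :
      Chain C q

abbrev Chains (C : UpdownData) := Σ p : C.Obj, Chain C p

namespace Chain

variable {C : UpdownData}

/-- `Prefix c d f`: the chain `c` is an initial segment of `d`, and `f` is the composite of the
remaining steps of `d`. -/
inductive Prefix : {p q : C.Obj} → Chain C p → Chain C q → C.Hom p q → Prop
  | refl {p : C.Obj} (c : Chain C p) : Prefix c c (C.id p)
  | cons {p q r : C.Obj} {c : Chain C p} {d : Chain C q} {f : C.Hom p q} (h : Prefix c d f)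
      (g : C.Hom q r) (hr : C.rank r = C.rank q + 1) : Prefix c (cons d g hr) (C.comp f g)

variable {p q r : C.Obj} {c : Chain C p} {d : Chain C q} {e : Chain C r}

theorem Prefix.rank_le {f : C.Hom p q} (h : Prefix c d f) : C.rank p ≤ C.rank q := by
  induction h with
  | refl => exact le_rfl
  | cons _ _ _ ih => omega

theorem Prefix.eq_of_rank_le {f : C.Hom p q} (h : Prefix c d f) (hqp : C.rank q ≤ C.rank p) :
    (⟨p, c⟩ : Chains C) = ⟨q, d⟩ ∧ f ≍ C.id p := by
  cases h with
  | refl => exact ⟨rfl, HEq.rfl⟩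
  | cons h _ hr => exact absurd h.rank_le (by omega)

theorem Prefix.unique {f f' : C.Hom p q} (h : Prefix c d f) (h' : Prefix c d f') : f = f' := by
  induction h with
  | refl => exact (eq_of_heq (h'.eq_of_rank_le le_rfl).2).symm
  | cons h g hr ih =>
    cases h' with
    | refl => exact absurd h.rank_le (by omega)
    | cons h' => rw [ih h']

theorem Prefix.trans {f : C.Hom p q} {g : C.Hom q r} (hf : Prefix c d f) (hg : Prefix d e g) :
    Prefix c e (C.comp f g) := by
  induction hg with
  | refl => rwa [C.comp_id]
  | cons _ g' hr ih => rw [← C.assoc]; exact (ih hf).cons g' hr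

theorem nil_prefix (d : Chain C q) : ∃ f, Prefix nil d f := by
  induction d with
  | nil => exact ⟨_, .refl _⟩
  | cons _ g hr ih => obtain ⟨f, hf⟩ := ih; exact ⟨_, hf.cons g hr⟩

theorem prefix_cons (c : Chain C p) (f : C.Hom p q) (hr : C.rank q = C.rank p + 1) :
    Prefix c (Chain.cons c f hr) f := by
  simpa only [C.id_comp] using (Prefix.refl c).cons f hr

theorem Prefix.eq_cons {f : C.Hom p q} (h : Prefix c d f) (hr : C.rank q = C.rank p + 1) :
    d = Chain.cons c f hr := by
  cases h with
  | refl => omega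
  | cons h g =>
    obtain ⟨he, hf⟩ := h.eq_of_rank_le (by omega)
    obtain ⟨rfl, hc⟩ := Sigma.mk.inj_iff.1 he
    obtain rfl := eq_of_heq hc
    rw [eq_of_heq hf, C.id_comp]

theorem Prefix.exists_intermediate {f : C.Hom p q} (h : Prefix c d f) {k : ℕ}
    (hpk : C.rank p ≤ k) (hkq : k ≤ C.rank q) :
    ∃ (s : C.Obj) (e : Chain C s) (g₁ : C.Hom p s) (g₂ : C.Hom s q),
      C.rank s = k ∧ Prefix c e g₁ ∧ Prefix e d g₂ := by
  induction h with
  | refl c => exact ⟨_, c, _, _, by omega, .refl c, .refl c⟩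
  | cons h g hr ih =>
    rcases hkq.eq_or_lt with rfl | hk
    · exact ⟨_, Chain.cons _ g hr, _, _, rfl, h.cons g hr, .refl _⟩
    · obtain ⟨s, e, g₁, g₂, hs, h₁, h₂⟩ := ih (by omega)
      exact ⟨s, e, g₁, _, hs, h₁, h₂.cons g hr⟩

theorem Prefix.eq_of_rank_eq {p' : C.Obj} {c' : Chain C p'} {f : C.Hom p r} {f' : C.Hom p' r}
    (h : Prefix c e f) (h' : Prefix c' e f') (hp : C.rank p = C.rank p') :
    (⟨p, c⟩ : Chains C) = ⟨p', c'⟩ := by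
  induction h with
  | refl => exact ((h'.eq_of_rank_le hp.le).1).symm
  | cons h g hr ih =>
    cases h' with
    | refl => exact absurd h.rank_le (by omega)
    | cons h' => exact ih h'

theorem nonempty (hC : C.IsUpdownCat) (p : C.Obj) : Nonempty (Chain C p) := by
  induction hn : C.rank p generalizing p with
  | zero => rw [hC.zero_unique p hn]; exact ⟨nil⟩
  | succ n ih =>
    obtain ⟨r, hr, ⟨f⟩⟩ := hC.exists_hom_of_rank_eq_succ hn
    obtain ⟨c⟩ := ih r hr
    exact ⟨cons c f (by omega)⟩

instance subsingleton_prefix {p q : C.Obj} (c : Chain C p) (d : Chain C q) :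
    Subsingleton {f : C.Hom p q // c.Prefix d f} :=
  ⟨fun ⟨_, hf⟩ ⟨_, hg⟩ => Subtype.ext (hf.unique hg)⟩

theorem finite_rank_eq (hC : C.IsUpdownCat) (n : ℕ) :
    {a : Chains C | C.rank a.1 = n}.Finite := by
  induction n with
  | zero =>
    refine (Set.finite_singleton (⟨C.zero, nil⟩ : Chains C)).subset ?_
    rintro ⟨p, c⟩ (h : C.rank p = 0)
    cases c with
    | nil => rfl
    | cons c f hr => omega
  | succ n ih =>
    have := ih.to_subtype
    have := hC.homFinite
    let σ : (Σ (a : {a : Chains C | C.rank a.1 = n}) (q : C.level (n + 1)), C.Hom a.1.1 q.1) →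
        Chains C := fun ⟨⟨⟨_, c⟩, hp⟩, ⟨q, hq⟩, f⟩ =>
      ⟨q, cons c f (by rw [(hC.mem_level _ _).1 hq, hp])⟩
    refine (Set.finite_range σ).subset ?_
    rintro ⟨q, c⟩ (h : C.rank q = n + 1)
    cases c with
    | nil => rw [hC.rank_zero] at h; omega
    | cons c f hr =>
      have hc : (⟨_, c⟩ : Chains C) ∈ {a : Chains C | C.rank a.1 = n} := by
        simp only [Set.mem_ofPred_eq]; omega
      exact ⟨⟨⟨_, hc⟩, ⟨q, (hC.mem_level _ _).2 h⟩, f⟩, rfl⟩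

end Chain

noncomputable def universalCover (C : UpdownData) (hC : C.IsUpdownCat) : UpdownData where
  Obj := Chains C
  Hom a b := {f : C.Hom a.1 b.1 // a.2.Prefix b.2 f}
  id a := ⟨C.id a.1, .refl a.2⟩
  comp f g := ⟨C.comp f.1 g.1, f.2.trans g.2⟩
  id_comp f := Subtype.ext (C.id_comp f.1)
  comp_id f := Subtype.ext (C.comp_id f.1)
  assoc f g h := Subtype.ext (C.assoc f.1 g.1 h.1)
  rank a := C.rank a.1
  level n := (Chain.finite_rank_eq hC n).toFinset
  zero := ⟨C.zero, .nil⟩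

section UniversalCover

variable {C : UpdownData} (hC : C.IsUpdownCat)

instance universalCover.subsingleton_hom (a b : (universalCover C hC).Obj) :
    Subsingleton ((universalCover C hC).Hom a b) :=
  Chain.subsingleton_prefix a.2 b.2

theorem universalCover_isUpdownCat : (universalCover C hC).IsUpdownCat where
  mem_level n _ := Set.Finite.mem_toFinset _
  rank_zero := hC.rank_zero
  zero_unique := by
    rintro ⟨p, c⟩ (h : C.rank p = 0)
    cases c with
    | nil => rfl
    | cons c f hr => omega
  zero_init a := let ⟨f, hf⟩ := Chain.nil_prefix a.2; ⟨⟨f, hf⟩⟩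
  homFinite _ _ := Finite.of_subsingleton
  hom_rank _ _ u := u.2.rank_le.lt_or_eq.imp_right fun h => (u.2.eq_of_rank_le h.ge).1
  aut_group _ f := ⟨f, Subsingleton.elim _ _, Subsingleton.elim _ _⟩
  factor _ _ u hlt :=
    let ⟨s, e, g₁, g₂, hs, h₁, h₂⟩ := u.2.exists_intermediate (Nat.le_succ _) hlt.le
    ⟨⟨s, e⟩, ⟨g₁, h₁⟩, ⟨g₂, h₂⟩, hs, Subsingleton.elim _ _⟩
  free_pre _ _ _ _ _ _ := Subsingleton.elim _ _
  free_post _ _ _ _ _ _ := Subsingleton.elim _ _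

theorem simpleUD_universalCover : SimpleUD (universalCover C hC) := by
  refine ⟨fun _ _ => inferInstance, fun a b u k hak hkb => ?_⟩
  obtain ⟨s, e, g₁, g₂, hs, h₁, h₂⟩ := u.2.exists_intermediate (k := k) hak.le hkb.le
  refine ⟨⟨s, e⟩, ⟨hs, ⟨g₁, h₁⟩, ⟨g₂, h₂⟩, Subsingleton.elim _ _⟩, ?_⟩
  rintro ⟨s', e'⟩ ⟨hs', -, ⟨g, hg⟩, -⟩
  exact hg.eq_of_rank_eq h₂ (hs'.trans hs.symm)

def coverProj : UDFunctor (universalCover C hC) C where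
  obj a := a.1
  map u := u.1
  rank_eq _ := rfl
  map_id _ := rfl
  map_comp _ _ := rfl

theorem isCovering_coverProj : IsCovering (coverProj hC) := by
  refine ⟨fun p => ⟨⟨p, (Chain.nonempty hC p).some⟩, rfl⟩, ?_⟩
  rintro ⟨p, c⟩ ⟨q, d⟩ (hq : C.rank q = C.rank p + 1)
  refine ⟨?_, fun f => ⟨⟨⟨⟨q, .cons c f hq⟩, rfl⟩, f, Chain.prefix_cons c f hq⟩, rfl⟩⟩
  rintro ⟨⟨⟨q₁, d₁⟩, hq₁ : q₁ = q⟩, g₁, h₁⟩ ⟨⟨⟨q₂, d₂⟩, hq₂ : q₂ = q⟩, g₂, h₂⟩ hg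
  subst hq₁ hq₂
  dsimp only at g₁ h₁ g₂ h₂
  obtain rfl : g₁ = g₂ := eq_of_heq
    ((inducedMap_heq _ _ _ _).symm.trans ((heq_of_eq hg).trans (inducedMap_heq _ _ _ _)))
  obtain rfl := h₁.eq_cons hq
  obtain rfl := h₂.eq_cons hq
  rfl

end UniversalCover

section Lifting

variable {C C' : UpdownData} {P : UDFunctor C' C}

namespace Chain

inductive IsLift (P : UDFunctor C' C) :
    {p' : C'.Obj} → {p : C.Obj} → Chain C' p' → Chain C p → Prop
  | nil : IsLift P nil nil
  | cons {p' q' : C'.Obj} {p q : C.Obj} {c' : Chain C' p'} {c : Chain C p} {f' : C'.Hom p' q'}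
      {f : C.Hom p q} {hr' : C'.rank q' = C'.rank p' + 1} {hr : C.rank q = C.rank p + 1}
      (h : IsLift P c' c) (hq : P.obj q' = q) (hf : P.map f' ≍ f) :
      IsLift P (cons c' f' hr') (cons c f hr)

variable {p' q' : C'.Obj} {p q : C.Obj} {c' : Chain C' p'} {c : Chain C p}

theorem IsLift.obj_eq (h0 : P.obj C'.zero = C.zero) (h : IsLift P c' c) : P.obj p' = p := by
  cases h with
  | nil => exact h0
  | cons _ hq _ => exact hq

theorem exists_isLift (hP : IsCovering P) (h0 : P.obj C'.zero = C.zero) (c : Chain C p) :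
    ∃ c' : Chains C', IsLift P c'.2 c := by
  induction c with
  | nil => exact ⟨⟨_, nil⟩, .nil⟩
  | cons c f hr ih =>
    obtain ⟨⟨p', c'⟩, h⟩ := ih
    obtain rfl := h.obj_eq h0
    obtain ⟨q', f', hq', hf'⟩ := hP.exists_lift p' f (by rw [hr, P.rank_eq])
    exact ⟨⟨q', cons c' f' (by rw [← P.rank_eq, hq', hr, P.rank_eq])⟩, h.cons hq' hf'⟩

theorem IsLift.unique (hP : IsUUMorphism P) {c₁ : Chain C' p'} {c₂ : Chain C' q'}
    (h₁ : IsLift P c₁ c) (h₂ : IsLift P c₂ c) : (⟨p', c₁⟩ : Chains C') = ⟨q', c₂⟩ := by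
  induction h₁ generalizing q' with
  | nil => cases h₂; rfl
  | cons _ hq₁ hf₁ ih =>
    cases h₂ with
    | cons h₂ hq₂ hf₂ =>
      obtain ⟨rfl, hc⟩ := Sigma.mk.inj_iff.1 (ih h₂)
      obtain rfl := eq_of_heq hc
      obtain ⟨rfl, hf⟩ := hP.lift_unique _ _ ‹_› (hq₁.trans hq₂.symm) (hf₁.trans hf₂.symm)
      obtain rfl := eq_of_heq hf
      rfl

theorem IsLift.exists_prefix (hP : IsUUMorphism P) (h0 : P.obj C'.zero = C.zero)
    {d' : Chain C' q'} {d : Chain C q} {f : C.Hom p q}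
    (hc : IsLift P c' c) (hd : IsLift P d' d) (h : c.Prefix d f) :
    ∃ f', c'.Prefix d' f' ∧ P.map f' ≍ f := by
  induction h generalizing q' with
  | refl =>
    obtain ⟨rfl, hcd⟩ := Sigma.mk.inj_iff.1 (hc.unique hP hd)
    obtain rfl := eq_of_heq hcd
    obtain rfl := hc.obj_eq h0
    exact ⟨_, .refl _, by rw [P.map_id]⟩
  | cons h g hr ih =>
    cases hd with
    | cons hd hq hg =>
      obtain ⟨f', hf', hPf'⟩ := ih hc hd
      refine ⟨_, hf'.cons _ _, ?_⟩
      rw [P.map_comp]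
      exact comp_heq (hc.obj_eq h0) (hd.obj_eq h0) hq hPf' hg

end Chain

variable (hC : C.IsUpdownCat) (hC' : C'.IsUpdownCat) (hP : IsCovering P)

noncomputable def liftChain {p : C.Obj} (c : Chain C p) : Chains C' :=
  (Chain.exists_isLift hP (P.obj_zero hC' hC) c).choose

theorem isLift_liftChain {p : C.Obj} (c : Chain C p) :
    (liftChain hC hC' hP c).2.IsLift P c :=
  (Chain.exists_isLift hP (P.obj_zero hC' hC) c).choose_spec

theorem exists_prefix_liftChain {p q : C.Obj} {c : Chain C p} {d : Chain C q} {f : C.Hom p q}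
    (h : c.Prefix d f) :
    ∃ f', (liftChain hC hC' hP c).2.Prefix (liftChain hC hC' hP d).2 f' ∧ P.map f' ≍ f :=
  (isLift_liftChain hC hC' hP c).exists_prefix hP.isUUMorphism (P.obj_zero hC' hC)
    (isLift_liftChain hC hC' hP d) h

noncomputable def coverLift : UDFunctor (universalCover C hC) C' where
  obj a := (liftChain hC hC' hP a.2).1
  map u := (exists_prefix_liftChain hC hC' hP u.2).choose
  rank_eq a := by
    rw [← P.rank_eq, (isLift_liftChain hC hC' hP a.2).obj_eq (P.obj_zero hC' hC)]
    rfl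
  map_id a := (exists_prefix_liftChain hC hC' hP (.refl a.2)).choose_spec.1.unique (.refl _)
  map_comp u v := (exists_prefix_liftChain hC hC' hP (u.2.trans v.2)).choose_spec.1.unique
    ((exists_prefix_liftChain hC hC' hP u.2).choose_spec.1.trans
      (exists_prefix_liftChain hC hC' hP v.2).choose_spec.1)

theorem coverLift_comp : (coverLift hC hC' hP).comp P = coverProj hC :=
  UDFunctor.ext
    (fun a => show P.obj _ = _ from (isLift_liftChain hC hC' hP a.2).obj_eq (P.obj_zero hC' hC))
    (fun u => (exists_prefix_liftChain hC hC' hP u.2).choose_spec.2)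

theorem isCovering_coverLift : IsCovering (coverLift hC hC' hP) :=
  IsCovering.of_comp (universalCover_isUpdownCat hC) hC'
    (coverLift_comp hC hC' hP ▸ isCovering_coverProj hC) hP.isUUMorphism

end Lifting

end UpdownData

open UpdownData in
theorem updown_unilateral_has_universal_cover_general (C : UpdownData)
    (hC : C.IsUpdownCat) :
    ∃ (Ct : UpdownData) (π : UDFunctor Ct C),
      Ct.IsUpdownCat ∧ SimpleUD Ct ∧ IsCovering π ∧
      ∀ (C' : UpdownData) (P : UDFunctor C' C),
        C'.IsUpdownCat → Unilateral C' → IsCovering P →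
        ∃ F : UDFunctor Ct C', IsCovering F ∧ UDFunctor.comp F P = π :=
  ⟨universalCover C hC, coverProj hC, universalCover_isUpdownCat hC, simpleUD_universalCover hC,
    isCovering_coverProj hC, fun _ _ hC' _ hP =>
      ⟨coverLift hC hC' hP, isCovering_coverLift hC hC' hP, coverLift_comp hC hC' hP⟩⟩

open UpdownData in
/-- every unilateral updown category has a universal cover: a
simple updown category `Ct` with a covering map `π : Ct → C` such that every
covering map `P : C' → C` factors as `π = P ∘ F` for some covering map
`F : Ct → C'`. -/
theorem updown_unilateral_has_universal_cover (C : UpdownData)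
    (hC : C.IsUpdownCat) (hu : Unilateral C) :
    ∃ (Ct : UpdownData) (π : UDFunctor Ct C),
      Ct.IsUpdownCat ∧ SimpleUD Ct ∧ IsCovering π ∧
      ∀ (C' : UpdownData) (P : UDFunctor C' C),
        C'.IsUpdownCat → Unilateral C' → IsCovering P →
        ∃ F : UDFunctor Ct C', IsCovering F ∧ UDFunctor.comp F P = π :=
  updown_unilateral_has_universal_cover_general C hC
end

section
/- Let K(ObC) be the free vector space over a characteristic-0 field spanned by all integer partitions, with U(λ) = Σ_μ u(λ;μ)μ where u(λ;μ) = 1 if μ is λ with a new part of size 1 added, u(λ;μ) = m_k(λ) if μ is obtained by increasing a part of size k in λ to k+1, and 0 otherwise; and D(λ) = Σ_ν d(ν;λ)ν where d(ν;λ) = m_1(λ) if λ is ν with a new part 1 added, and d(ν;λ) = m_{k+1}(λ) if λ is obtained by increasing a part of size k of ν to k+1. Then (DU − UD)(λ) = (1 + m₁(λ))·λ for every partition λ, where m₁(λ) is the number of parts of λ equal to 1. -/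
/-! Kingman's branching on integer partitions. A partition is a
finite multiset of positive natural numbers; `m_k(λ)` is `λ.count k`. -/

namespace PartitionUD

/-- `U(λ) = Σ_μ u(λ;μ)·μ`: adding a new part `1` with multiplicity `1`, and
increasing a part of size `k` to `k+1` with multiplicity `m_k(λ)`. -/
noncomputable def Uvec (lam : Multiset ℕ) : Multiset ℕ →₀ ℚ :=
  Finsupp.single (1 ::ₘ lam) 1 +
    ∑ k ∈ lam.toFinset,
      (lam.count k : ℚ) • Finsupp.single ((k + 1) ::ₘ lam.erase k) 1

/-- `D(λ) = Σ_ν d(ν;λ)·ν`: removing a part `1` with multiplicity `m_1(λ)`,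
and decreasing a part of size `k ≥ 2` to `k−1` with multiplicity `m_k(λ)`
(so that `d(ν;λ) = m_{j+1}(λ)` when `λ` is obtained from `ν` by increasing a
part of size `j` to `j+1`). -/
noncomputable def Dvec (lam : Multiset ℕ) : Multiset ℕ →₀ ℚ :=
  (lam.count 1 : ℚ) • Finsupp.single (lam.erase 1) 1 +
    ∑ k ∈ lam.toFinset.filter (fun k => 2 ≤ k),
      (lam.count k : ℚ) • Finsupp.single ((k - 1) ::ₘ lam.erase k) 1

/-- The up operator on the free vector space on partitions. -/
noncomputable def Uop : (Multiset ℕ →₀ ℚ) →ₗ[ℚ] (Multiset ℕ →₀ ℚ) :=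
  Finsupp.lsum ℚ fun lam => LinearMap.toSpanSingleton ℚ _ (Uvec lam)

/-- The down operator on the free vector space on partitions. -/
noncomputable def Dop : (Multiset ℕ →₀ ℚ) →ₗ[ℚ] (Multiset ℕ →₀ ℚ) :=
  Finsupp.lsum ℚ fun lam => LinearMap.toSpanSingleton ℚ _ (Dvec lam)

/-!
Let `C n = consOp n` prepend a part `n` to a partition. Adding or moving one box of `n ::ₘ λ`
happens either inside `λ` or at the new part, which gives `U C n = C n U + C (n+1)`,
`D C n = C n D + C (n-1)` for `n ≥ 2`, and `D C 1 = C 1 D + 1`. The boundary terms cancel in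
the commutator, so `⁅D, U⁆ C n = C n ⁅D, U⁆` for `n ≥ 2` while `⁅D, U⁆ C 1 = C 1 (⁅D, U⁆ + 1)`.
Induction on the number of parts, starting from `⁅D, U⁆ ∅ = ∅`, gives the eigenvalue `1 + m₁(λ)`.
-/

noncomputable def consOp (n : ℕ) : Module.End ℚ (Multiset ℕ →₀ ℚ) :=
  Finsupp.lmapDomain ℚ ℚ (n ::ₘ ·)

lemma consOp_single (n : ℕ) (lam : Multiset ℕ) (b : ℚ) :
    consOp n (Finsupp.single lam b) = Finsupp.single (n ::ₘ lam) b :=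
  Finsupp.mapDomain_single

lemma Uop_single (lam : Multiset ℕ) (b : ℚ) : Uop (Finsupp.single lam b) = b • Uvec lam := by
  rw [Uop, Finsupp.lsum_single, LinearMap.toSpanSingleton_apply]

lemma Dop_single (lam : Multiset ℕ) (b : ℚ) : Dop (Finsupp.single lam b) = b • Dvec lam := by
  rw [Dop, Finsupp.lsum_single, LinearMap.toSpanSingleton_apply]

lemma Uvec_eq_sum_map (lam : Multiset ℕ) :
    Uvec lam = Finsupp.single (1 ::ₘ lam) 1 +
      (lam.map fun k => Finsupp.single ((k + 1) ::ₘ lam.erase k) (1 : ℚ)).sum := by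
  rw [Uvec, Finset.sum_multiset_map_count]
  rfl

lemma Dvec_eq_sum_map (lam : Multiset ℕ) :
    Dvec lam = (lam.count 1 : ℚ) • Finsupp.single (lam.erase 1) 1 +
      ((lam.filter (2 ≤ ·)).map
        fun k => Finsupp.single ((k - 1) ::ₘ lam.erase k) (1 : ℚ)).sum := by
  rw [Dvec, Finset.sum_multiset_map_count, Multiset.toFinset_filter]
  congr 1
  refine Finset.sum_congr rfl fun k hk => ?_
  rw [Multiset.count_filter, if_pos (Finset.mem_filter.mp hk).2, Nat.cast_smul_eq_nsmul]

lemma sum_map_single_cons_erase (n : ℕ) (f : ℕ → ℕ) (s lam : Multiset ℕ) (hs : s ≤ lam) :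
    (s.map fun k => Finsupp.single (f k ::ₘ (n ::ₘ lam).erase k) (1 : ℚ)).sum =
      consOp n (s.map fun k => Finsupp.single (f k ::ₘ lam.erase k) (1 : ℚ)).sum := by
  rw [map_multiset_sum, Multiset.map_map]
  refine congrArg _ (Multiset.map_congr rfl fun k hk => ?_)
  rw [Function.comp_apply, consOp_single,
    Multiset.erase_cons_tail_of_mem (Multiset.mem_of_le hs hk), Multiset.cons_swap]

lemma Uvec_cons (n : ℕ) (lam : Multiset ℕ) :
    Uvec (n ::ₘ lam) = consOp n (Uvec lam) + Finsupp.single ((n + 1) ::ₘ lam) 1 := by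
  rw [Uvec_eq_sum_map, Uvec_eq_sum_map, Multiset.map_cons, Multiset.sum_cons,
    Multiset.erase_cons_head, sum_map_single_cons_erase n _ lam lam le_rfl, map_add,
    consOp_single, Multiset.cons_swap]
  abel

lemma Dvec_cons_one (lam : Multiset ℕ) :
    Dvec (1 ::ₘ lam) = consOp 1 (Dvec lam) + Finsupp.single lam 1 := by
  have hcount : (lam.count 1 : ℚ) • Finsupp.single (1 ::ₘ lam.erase 1) (1 : ℚ) =
      (lam.count 1 : ℚ) • Finsupp.single lam 1 := by
    by_cases h : 1 ∈ lam
    · rw [Multiset.cons_erase h]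
    · rw [Multiset.count_eq_zero_of_notMem h, Nat.cast_zero, zero_smul, zero_smul]
  rw [Dvec_eq_sum_map, Dvec_eq_sum_map, Multiset.filter_cons_of_neg _ (by omega),
    sum_map_single_cons_erase 1 _ _ lam (Multiset.filter_le _ _), map_add, map_smul,
    consOp_single, Multiset.erase_cons_head, Multiset.count_cons_self, hcount]
  push_cast
  rw [add_smul, one_smul]
  abel

lemma Dvec_cons {n : ℕ} (hn : 2 ≤ n) (lam : Multiset ℕ) :
    Dvec (n ::ₘ lam) = consOp n (Dvec lam) + Finsupp.single ((n - 1) ::ₘ lam) 1 := by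
  rw [Dvec_eq_sum_map, Dvec_eq_sum_map, Multiset.filter_cons_of_pos _ hn, Multiset.map_cons,
    Multiset.sum_cons, Multiset.erase_cons_head,
    sum_map_single_cons_erase n _ _ lam (Multiset.filter_le _ _), map_add, map_smul,
    consOp_single, Multiset.count_cons_of_ne (by omega), Multiset.erase_cons_tail _ (by omega)]
  abel

lemma Uop_mul_consOp (n : ℕ) : Uop * consOp n = consOp n * Uop + consOp (n + 1) := by
  refine Finsupp.lhom_ext fun lam b => ?_
  simp only [Module.End.mul_apply, LinearMap.add_apply, consOp_single, Uop_single, Uvec_cons,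
    map_smul, smul_add, Finsupp.smul_single, smul_eq_mul, mul_one]

lemma Dop_mul_consOp_one : Dop * consOp 1 = consOp 1 * Dop + 1 := by
  refine Finsupp.lhom_ext fun lam b => ?_
  simp only [Module.End.mul_apply, LinearMap.add_apply, Module.End.one_apply, consOp_single,
    Dop_single, Dvec_cons_one, map_smul, smul_add, Finsupp.smul_single, smul_eq_mul, mul_one]

lemma Dop_mul_consOp {n : ℕ} (hn : 2 ≤ n) :
    Dop * consOp n = consOp n * Dop + consOp (n - 1) := by
  refine Finsupp.lhom_ext fun lam b => ?_
  simp only [Module.End.mul_apply, LinearMap.add_apply, consOp_single, Dop_single, Dvec_cons hn,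
    map_smul, smul_add, Finsupp.smul_single, smul_eq_mul, mul_one]

lemma lie_Dop_Uop_mul_consOp_one :
    ⁅Dop, Uop⁆ * consOp 1 = consOp 1 * (⁅Dop, Uop⁆ + 1) := by
  have hDU : Dop * Uop * consOp 1 =
      consOp 1 * (Dop * Uop) + Uop + consOp 2 * Dop + consOp 1 := by
    rw [mul_assoc, Uop_mul_consOp, mul_add, ← mul_assoc, Dop_mul_consOp_one,
      Dop_mul_consOp le_rfl, add_mul, mul_assoc, one_mul, show 2 - 1 = 1 from rfl]
    abel
  have hUD : Uop * Dop * consOp 1 = consOp 1 * (Uop * Dop) + Uop + consOp 2 * Dop := by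
    rw [mul_assoc, Dop_mul_consOp_one, mul_add, mul_one, ← mul_assoc, Uop_mul_consOp, add_mul,
      mul_assoc]
    abel
  rw [Ring.lie_def, sub_mul, hDU, hUD, mul_add, mul_sub, mul_one]
  abel

lemma lie_Dop_Uop_mul_consOp {n : ℕ} (hn : 2 ≤ n) :
    ⁅Dop, Uop⁆ * consOp n = consOp n * ⁅Dop, Uop⁆ := by
  have hDU : Dop * Uop * consOp n =
      consOp n * (Dop * Uop) + consOp (n - 1) * Uop + consOp (n + 1) * Dop + consOp n := by
    rw [mul_assoc, Uop_mul_consOp, mul_add, ← mul_assoc, Dop_mul_consOp hn,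
      Dop_mul_consOp (by omega : 2 ≤ n + 1), Nat.add_sub_cancel, add_mul, mul_assoc]
    abel
  have hUD : Uop * Dop * consOp n =
      consOp n * (Uop * Dop) + consOp (n - 1) * Uop + consOp (n + 1) * Dop + consOp n := by
    rw [mul_assoc, Dop_mul_consOp hn, mul_add, ← mul_assoc, Uop_mul_consOp, Uop_mul_consOp,
      Nat.sub_add_cancel (by omega : 1 ≤ n), add_mul, mul_assoc]
    abel
  rw [Ring.lie_def, sub_mul, hDU, hUD, mul_sub]
  abel

lemma lie_Dop_Uop_single_zero :
    ⁅Dop, Uop⁆ (Finsupp.single 0 1) = Finsupp.single (0 : Multiset ℕ) 1 := by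
  have hD : Dvec 0 = 0 := by simp [Dvec]
  rw [Ring.lie_def, LinearMap.sub_apply, Module.End.mul_apply, Module.End.mul_apply, Dop_single,
    hD, smul_zero, map_zero, sub_zero, Uop_single, one_smul, Uvec]
  simp [Dop_single, Dvec, Finset.filter_singleton]

/-- `(DU − UD)(λ) = (1 + m₁(λ))·λ` for every integer partition `λ`. -/
theorem commutator_eq (lam : Multiset ℕ) (hpos : ∀ k ∈ lam, 0 < k) :
    Dop (Uop (Finsupp.single lam 1)) - Uop (Dop (Finsupp.single lam 1)) =
      (1 + (lam.count 1 : ℚ)) • Finsupp.single lam 1 := by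
  change ⁅Dop, Uop⁆ (Finsupp.single lam 1) = _
  induction lam using Multiset.induction with
  | empty => simp [lie_Dop_Uop_single_zero]
  | cons n lam ih =>
    have hn : 0 < n := hpos n (Multiset.mem_cons_self n lam)
    have ih := ih fun k hk => hpos k (Multiset.mem_cons_of_mem hk)
    rw [← consOp_single, ← Module.End.mul_apply]
    rcases (by omega : n = 1 ∨ 2 ≤ n) with rfl | h2
    · rw [lie_Dop_Uop_mul_consOp_one, Module.End.mul_apply, LinearMap.add_apply, ih,
        Module.End.one_apply, map_add, map_smul, consOp_single, Multiset.count_cons_self]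
      push_cast
      module
    · rw [lie_Dop_Uop_mul_consOp h2, Module.End.mul_apply, ih, map_smul, consOp_single,
        Multiset.count_cons_of_ne (by omega)]

end PartitionUD
end

section
/- Let C be the updown category of integer compositions, with U(I) = Σ_J u(I;J)J and D the adjoint down operator, where for compositions I, J with |J| = |I| + 1, u(I;J) = d(I;J) counts the order-preserving injections f : [ℓ(I)] → [ℓ(J)] with I_a ≤ J_{f(a)} for all a. Then (DU − UD)(I) = (ℓ(I) + 2m₁(I) + 1)·I for every composition I, where ℓ(I) is the number of parts of I and m₁(I) is the number of parts equal to 1. -/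
/-! Statement 17: the updown category of integer compositions. A composition
is a list of positive natural numbers. -/

namespace CompositionUD

/-- The multiplicity `u(I;J) = d(I;J)`: the number of order-preserving
injections `f : [ℓ(I)] → [ℓ(J)]` with `I_a ≤ J_{f(a)}` for all `a`. -/
noncomputable def uC (I J : List ℕ) : ℚ :=
  Nat.card {f : Fin I.length → Fin J.length //
    StrictMono f ∧ ∀ a : Fin I.length, I.get a ≤ J.get (f a)}

/-- The compositions covering `I`: those obtained by inserting a new part `1`
or incrementing a part (`u(I;J) = 0` for all other `J` with `|J|=|I|+1`). -/
def upCandidates (I : List ℕ) : Finset (List ℕ) :=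
  ((Finset.range (I.length + 1)).image fun i => I.insertIdx i 1) ∪
    ((Finset.range I.length).image fun i => I.set i (I.getD i 0 + 1))

/-- The compositions covered by `I`: those obtained by deleting a part `1` or
decrementing a part `≥ 2`. -/
def downCandidates (I : List ℕ) : Finset (List ℕ) :=
  (((Finset.range I.length).filter fun i => I.getD i 0 = 1).image
      fun i => I.eraseIdx i) ∪
    (((Finset.range I.length).filter fun i => 2 ≤ I.getD i 0).image
      fun i => I.set i (I.getD i 0 - 1))

/-- `U(I) = Σ_J u(I;J)·J` over compositions `J` covering `I`. -/
noncomputable def Uvec (I : List ℕ) : List ℕ →₀ ℚ :=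
  ∑ J ∈ upCandidates I, uC I J • Finsupp.single J 1

/-- `D(I) = Σ_K d(K;I)·K` over compositions `K` covered by `I`, where
`d(K;I) = u(K;I)`. -/
noncomputable def Dvec (I : List ℕ) : List ℕ →₀ ℚ :=
  ∑ K ∈ downCandidates I, uC K I • Finsupp.single K 1

/-- The up operator. -/
noncomputable def Uop : (List ℕ →₀ ℚ) →ₗ[ℚ] (List ℕ →₀ ℚ) :=
  Finsupp.lsum ℚ fun I => LinearMap.toSpanSingleton ℚ _ (Uvec I)

/-- The down operator. -/
noncomputable def Dop : (List ℕ →₀ ℚ) →ₗ[ℚ] (List ℕ →₀ ℚ) :=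
  Finsupp.lsum ℚ fun I => LinearMap.toSpanSingleton ℚ _ (Dvec I)

/-!
Prepending a part `n ≥ 1` (juxtaposition `(n) ⊔ ·`, here `consOp n`) interacts with both
operators through the juxtaposition rules with `I = (n)`:
`U(n ⊔ K) = (1, n) ⊔ K + (n + 1) ⊔ K + n ⊔ U(K)` and `D(n ⊔ K) = D(n) ⊔ K + n ⊔ D(K)`,
where `D(1) = ∅` and `D(n) = (n - 1)` otherwise. Expanding `DU - UD` on `n ⊔ K` with these rules,
everything cancels except `n ⊔ (DU - UD)(K)` and `3 · (1 ⊔ K)` if `n = 1`, resp. `1 · (n ⊔ K)` if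
`n ≥ 2`, which is exactly the increase of `ℓ + 2 m₁ + 1`; induction on `ℓ` concludes.

The rules themselves come from computing the multiplicities. A strictly monotone map
`[ℓ] → [ℓ + 1]` is `b.succAbove` for the unique point `b` it misses, so `u(I; J)` counts the `b`
such that `I ≤ J ∖ J_b` pointwise. When `J` has rank `|I| + 1` this forces `J_b = 1` and
`J ∖ J_b = I`, so `u(I; J)` is the number of ways to insert a part `1` into `I` to obtain `J`;
and `u(I; J) = 1` when `J` is `I` with one part raised by one.
-/

end CompositionUD

open Finset

theorem Fin.val_succAbove {k : ℕ} (b : Fin (k + 1)) (a : Fin k) :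
    (b.succAbove a : ℕ) = if a.1 < b.1 then a.1 else a.1 + 1 := by
  unfold Fin.succAbove
  split_ifs <;> simp_all [Fin.lt_def]

theorem Fin.card_filter_val (n : ℕ) (Q : ℕ → Prop) [DecidablePred Q] :
    #{b : Fin n | Q b} = #{b ∈ range n | Q b} := by
  rw [← Nat.Iio_eq_range, ← Fin.map_valEmbedding_univ, filter_map, card_map]
  rfl

theorem Fin.exists_succAbove_eq_of_strictMono {m : ℕ} {f : Fin m → Fin (m + 1)}
    (hf : StrictMono f) : ∃ b : Fin (m + 1), b.succAbove = f := by
  obtain ⟨b, hb⟩ : ∃ b, b ∉ Set.range f := by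
    by_contra! h
    simpa using Fintype.card_le_of_surjective f h
  choose g hg using fun a => Fin.exists_succAbove_eq fun h : f a = b => hb ⟨a, h⟩
  have hg_mono : StrictMono g := fun a a' h => by
    rw [← Fin.succAbove_lt_succAbove_iff (p := b), hg, hg]
    exact hf h
  exact ⟨b, funext fun a => by rw [← hg a, hg_mono.apply_eq]⟩

theorem Fin.natCard_strictMono_self {m : ℕ} {P : (Fin m → Fin m) → Prop} (h : P id) :
    Nat.card {f : Fin m → Fin m // StrictMono f ∧ P f} = 1 :=
  Nat.card_eq_one_iff_unique.2
    ⟨⟨fun f g => Subtype.ext (f.2.1.eq_id.trans g.2.1.eq_id.symm)⟩, ⟨⟨id, strictMono_id, h⟩⟩⟩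

theorem Fin.natCard_strictMono_succ {m : ℕ} (P : (Fin m → Fin (m + 1)) → Prop) :
    Nat.card {f : Fin m → Fin (m + 1) // StrictMono f ∧ P f} =
      Nat.card {b : Fin (m + 1) // P b.succAbove} := by
  refine (Nat.card_eq_of_bijective (fun b => ⟨b.1.succAbove, Fin.strictMono_succAbove _, b.2⟩)
    ⟨fun b b' h => Subtype.ext (Fin.succAbove_left_injective (congrArg Subtype.val h)), ?_⟩).symm
  rintro ⟨f, hf, hP⟩
  obtain ⟨b, rfl⟩ := Fin.exists_succAbove_eq_of_strictMono hf
  exact ⟨⟨b, hP⟩, rfl⟩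

namespace List

theorem forall₂_eraseIdx_iff {α β : Type*} {R : α → β → Prop} {l₁ : List α} {l₂ : List β}
    (hl : l₂.length = l₁.length + 1) (b : Fin (l₁.length + 1)) :
    Forall₂ R l₁ (l₂.eraseIdx b) ↔
      ∀ a : Fin l₁.length, R (l₁.get a) (l₂.get ((b.succAbove a).cast hl.symm)) := by
  have hlen : (l₂.eraseIdx b).length = l₁.length := by
    rw [length_eraseIdx_of_lt (by omega)]; omega
  rw [forall₂_iff_get]
  simp only [hlen, true_and, Fin.forall_iff, get_eq_getElem, getElem_eraseIdx, Fin.val_cast]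
  refine forall₂_congr fun i hi => ?_
  simp only [hi, forall_true_left, Fin.val_succAbove]
  split_ifs <;> rfl

theorem forall₂_set {α : Type*} {R : α → α → Prop} [Std.Refl R] :
    ∀ {l : List α} {i : ℕ} {x : α}, (∀ h : i < l.length, R l[i] x) → Forall₂ R l (l.set i x)
  | [], _, _, _ => .nil
  | _ :: l, 0, _, h => .cons (h (by simp)) (forall₂_refl l)
  | a :: _, _ + 1, _, h => .cons (refl a) (forall₂_set fun hi => h (by simpa using hi))

theorem eq_of_forall₂_le_of_sum_le {l₁ l₂ : List ℕ} (h : Forall₂ (· ≤ ·) l₁ l₂)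
    (hsum : l₂.sum ≤ l₁.sum) : l₁ = l₂ := by
  induction h with
  | nil => rfl
  | cons hab h ih =>
    have := h.sum_le_sum
    simp only [sum_cons] at hsum
    obtain rfl := le_antisymm hab (by omega)
    rw [ih (by omega)]

theorem getD_eq_and_eraseIdx_eq_iff {α : Type*} {l₁ l₂ : List α} {b : ℕ} {x d : α}
    (hb : b < l₂.length) : l₂.getD b d = x ∧ l₂.eraseIdx b = l₁ ↔ l₁.insertIdx b x = l₂ := by
  constructor
  · rintro ⟨rfl, rfl⟩
    rw [getD_eq_getElem _ _ hb, insertIdx_eraseIdx_getElem]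
  · rintro rfl
    rw [getD_eq_getElem _ _ hb, getElem_insertIdx_self]
    exact ⟨rfl, eraseIdx_insertIdx_self x⟩

end List

theorem Finset.sum_image_smul_of_card_fiber {ι α R M : Type*} [DecidableEq α]
    [Semiring R] [AddCommMonoid M] [Module R M] {s : Finset ι} {g : ι → α} {c : α → R}
    {v : α → M} (h : ∀ i ∈ s, c (g i) = #{j ∈ s | g j = g i}) :
    ∑ x ∈ s.image g, c x • v x = ∑ i ∈ s, v (g i) := by
  refine sum_image' _ fun i hi => ?_
  rw [sum_congr rfl fun j hj => by rw [(mem_filter.1 hj).2], sum_const, h i hi,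
    Nat.cast_smul_eq_nsmul]

theorem List.injOn_set_getD {α : Type*} {l : List α} {d : α} {φ : α → α} {s : Set ℕ}
    (h : ∀ i ∈ s, i < l.length ∧ φ (l.getD i d) ≠ l.getD i d) :
    s.InjOn fun i => l.set i (φ (l.getD i d)) := by
  intro i hi j _ hij
  by_contra hne
  have := congrArg (·[i]?) hij
  simp only [getElem?_set, if_pos (h i hi).1, if_neg (Ne.symm hne), reduceIte] at this
  rw [getElem?_eq_getElem (h i hi).1, Option.some_inj, ← getD_eq_getElem _ d] at this
  exact (h i hi).2 this

namespace Finsupp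

variable {α R M : Type*} [Semiring R] [AddCommMonoid M] [Module R M] {s : Set α}

theorem map_mem_of_mem_supported (L : (α →₀ R) →ₗ[R] M) {p : Submodule R M}
    (hL : ∀ a ∈ s, L (single a 1) ∈ p) {x : α →₀ R} (hx : x ∈ supported R R s) : L x ∈ p := by
  rw [supported_eq_span_single] at hx
  have hspan : Submodule.span R ((fun a => single a 1) '' s) ≤ p.comap L :=
    Submodule.span_le.2 (by rintro _ ⟨a, ha, rfl⟩; exact hL a ha)
  exact hspan hx

theorem eqOn_supported_of_single {L L' : (α →₀ R) →ₗ[R] M}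
    (h : ∀ a ∈ s, L (single a 1) = L' (single a 1)) {x : α →₀ R} (hx : x ∈ supported R R s) :
    L x = L' x := by
  rw [supported_eq_span_single] at hx
  exact LinearMap.eqOn_span' (by rintro _ ⟨a, ha, rfl⟩; exact h a ha) hx

end Finsupp

namespace CompositionUD

def compositions : Set (List ℕ) := {I | ∀ a ∈ I, 0 < a}

theorem cons_mem_compositions {n : ℕ} {I : List ℕ} :
    n :: I ∈ compositions ↔ 0 < n ∧ I ∈ compositions :=
  List.forall_mem_cons

theorem insertIdx_mem_compositions {I : List ℕ} (hI : I ∈ compositions) {i : ℕ}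
    (hi : i ≤ I.length) : I.insertIdx i 1 ∈ compositions := fun a ha => by
  rcases (List.mem_insertIdx hi).1 ha with rfl | ha
  exacts [one_pos, hI a ha]

theorem set_mem_compositions {I : List ℕ} (hI : I ∈ compositions) {i x : ℕ} (hx : 0 < x) :
    I.set i x ∈ compositions := fun a ha => by
  rcases List.mem_or_eq_of_mem_set ha with ha | rfl
  exacts [hI a ha, hx]

theorem eraseIdx_mem_compositions {I : List ℕ} (hI : I ∈ compositions) (i : ℕ) :
    I.eraseIdx i ∈ compositions := fun a ha => hI a (List.mem_of_mem_eraseIdx ha)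

theorem one_le_getD {I : List ℕ} (hI : I ∈ compositions) {i : ℕ} (hi : i < I.length) :
    1 ≤ I.getD i 0 := by
  rw [List.getD_eq_getElem _ _ hi]
  exact hI _ (List.getElem_mem hi)

-- Lets the codomain `Fin J.length` be replaced by `Fin m` or `Fin (m + 1)` syntactically.
theorem uC_eq_natCard_cast {I J : List ℕ} {n : ℕ} (hn : J.length = n) :
    uC I J = Nat.card {f : Fin I.length → Fin n //
      StrictMono f ∧ ∀ a, I.get a ≤ J.get ((f a).cast hn.symm)} := by
  subst hn
  rfl

theorem uC_eq_one {I J : List ℕ} (h : List.Forall₂ (· ≤ ·) I J) : uC I J = 1 := by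
  rw [uC_eq_natCard_cast h.length_eq.symm, Fin.natCard_strictMono_self fun a => h.get a.2 _,
    Nat.cast_one]

theorem uC_eq_card_forall₂_eraseIdx {I J : List ℕ} (hlen : J.length = I.length + 1) :
    uC I J = #{b ∈ range J.length | List.Forall₂ (· ≤ ·) I (J.eraseIdx b)} := by
  have hrange : range J.length = range (I.length + 1) := by rw [hlen]
  rw [uC_eq_natCard_cast hlen, Fin.natCard_strictMono_succ, Nat.card_eq_fintype_card,
    Fintype.card_subtype, hrange, ← Fin.card_filter_val]
  simp only [List.forall₂_eraseIdx_iff hlen]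

theorem uC_eq_card_eraseIdx_eq {I J : List ℕ} (hJ : J ∈ compositions)
    (hlen : J.length = I.length + 1) (hsum : J.sum = I.sum + 1) :
    uC I J = #{b ∈ range J.length | J.getD b 0 = 1 ∧ J.eraseIdx b = I} := by
  rw [uC_eq_card_forall₂_eraseIdx hlen]
  congr 2
  refine filter_congr fun b hb => ⟨fun h => ?_, fun ⟨_, h⟩ => h ▸ List.forall₂_refl _⟩
  rw [mem_range] at hb
  have hsplit := List.add_sum_eraseIdx hb fun _ _ => AddCommute.all _ _
  have hpos := hJ _ (List.getElem_mem hb)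
  obtain rfl := List.eq_of_forall₂_le_of_sum_le h (by omega)
  exact ⟨by rw [List.getD_eq_getElem _ _ hb]; omega, rfl⟩

theorem uC_eq_card_insertIdx_eq {I J : List ℕ} (hJ : J ∈ compositions)
    (hlen : J.length = I.length + 1) (hsum : J.sum = I.sum + 1) :
    uC I J = #{b ∈ range (I.length + 1) | I.insertIdx b 1 = J} := by
  rw [uC_eq_card_eraseIdx_eq hJ hlen hsum, hlen]
  congr 2
  exact filter_congr fun b hb => List.getD_eq_and_eraseIdx_eq_iff (by simpa [hlen] using hb)

theorem Uvec_eq {I : List ℕ} (hI : I ∈ compositions) :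
    Uvec I = ∑ i ∈ range (I.length + 1), Finsupp.single (I.insertIdx i 1) 1 +
      ∑ i ∈ range I.length, Finsupp.single (I.set i (I.getD i 0 + 1)) 1 := by
  have hdisj : Disjoint ((range (I.length + 1)).image fun i => I.insertIdx i 1)
      ((range I.length).image fun i => I.set i (I.getD i 0 + 1)) := by
    simp only [disjoint_left, mem_image, mem_range]
    rintro _ ⟨i, hi, rfl⟩ ⟨j, -, h⟩
    have := congrArg List.length h
    rw [List.length_set, List.length_insertIdx_of_le_length (by omega)] at this
    omega
  rw [Uvec, upCandidates, sum_union hdisj]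
  congr 1
  · refine sum_image_smul_of_card_fiber fun i hi => ?_
    have hi : i ≤ I.length := Nat.lt_succ_iff.1 (mem_range.1 hi)
    exact uC_eq_card_insertIdx_eq (insertIdx_mem_compositions hI hi)
      (List.length_insertIdx_of_le_length hi 1) (by rw [List.CommMonoid.sum_insertIdx hi, add_comm])
  · rw [sum_image (List.injOn_set_getD (φ := (· + 1)) fun i hi => ⟨mem_range.1 hi, by omega⟩)]
    refine sum_congr rfl fun i _ => ?_
    rw [uC_eq_one (List.forall₂_set fun hi => by rw [← List.getD_eq_getElem _ 0 hi]; omega),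
      one_smul]

theorem Dvec_eq {I : List ℕ} (hI : I ∈ compositions) :
    Dvec I = ∑ i ∈ range I.length, if I.getD i 0 = 1 then Finsupp.single (I.eraseIdx i) 1
      else Finsupp.single (I.set i (I.getD i 0 - 1)) 1 := by
  have hfilter : {i ∈ range I.length | ¬I.getD i 0 = 1} = {i ∈ range I.length | 2 ≤ I.getD i 0} :=
    filter_congr fun i hi => by have := one_le_getD hI (mem_range.1 hi); omega
  have hdisj : Disjoint ({i ∈ range I.length | I.getD i 0 = 1}.image fun i => I.eraseIdx i)
      ({i ∈ range I.length | 2 ≤ I.getD i 0}.image fun i => I.set i (I.getD i 0 - 1)) := by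
    simp only [disjoint_left, mem_image, mem_filter, mem_range]
    rintro _ ⟨i, ⟨hi, -⟩, rfl⟩ ⟨j, -, h⟩
    have := congrArg List.length h
    rw [List.length_set, List.length_eraseIdx_of_lt hi] at this
    omega
  rw [sum_ite, hfilter, Dvec, downCandidates, sum_union hdisj]
  congr 1
  · refine sum_image_smul_of_card_fiber fun i hi => ?_
    obtain ⟨hi, hi1⟩ := mem_filter.1 hi
    rw [mem_range] at hi
    have hsplit := List.add_sum_eraseIdx hi fun _ _ => AddCommute.all _ _
    rw [← List.getD_eq_getElem _ 0 hi, hi1] at hsplit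
    rw [filter_filter]
    exact uC_eq_card_eraseIdx_eq hI (by rw [List.length_eraseIdx_of_lt hi]; omega) (by omega)
  · rw [sum_image (List.injOn_set_getD (φ := (· - 1)) fun i hi => by
      obtain ⟨hi, hi2⟩ := mem_filter.1 hi
      exact ⟨mem_range.1 hi, by omega⟩)]
    refine sum_congr rfl fun i hi => ?_
    have hle : List.Forall₂ (· ≥ ·) I (I.set i (I.getD i 0 - 1)) :=
      List.forall₂_set fun hi => by rw [← List.getD_eq_getElem _ 0 hi]; omega
    rw [uC_eq_one (List.Forall₂.flip (R := (· ≤ ·)) hle), one_smul]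

noncomputable def consOp (n : ℕ) : (List ℕ →₀ ℚ) →ₗ[ℚ] (List ℕ →₀ ℚ) :=
  Finsupp.lmapDomain ℚ ℚ (List.cons n)

theorem consOp_single (n : ℕ) (K : List ℕ) (c : ℚ) :
    consOp n (Finsupp.single K c) = Finsupp.single (n :: K) c :=
  Finsupp.mapDomain_single

theorem Uop_single (K : List ℕ) : Uop (Finsupp.single K 1) = Uvec K := by
  rw [Uop, Finsupp.lsum_single, LinearMap.toSpanSingleton_apply, one_smul]

theorem Dop_single (K : List ℕ) : Dop (Finsupp.single K 1) = Dvec K := by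
  rw [Dop, Finsupp.lsum_single, LinearMap.toSpanSingleton_apply, one_smul]

theorem Uvec_cons {n : ℕ} {I : List ℕ} (hn : 0 < n) (hI : I ∈ compositions) :
    Uvec (n :: I) = Finsupp.single (1 :: n :: I) 1 + Finsupp.single ((n + 1) :: I) 1 +
      consOp n (Uvec I) := by
  rw [Uvec_eq (cons_mem_compositions.2 ⟨hn, hI⟩), Uvec_eq hI, map_add, map_sum, map_sum,
    List.length_cons, sum_range_succ' (fun i => Finsupp.single ((n :: I).insertIdx i 1) 1),
    sum_range_succ' (fun i => Finsupp.single ((n :: I).set i ((n :: I).getD i 0 + 1)) 1)]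
  simp only [consOp_single, List.insertIdx_succ_cons, List.set_cons_succ, List.getD_cons_succ,
    List.getD_cons_zero, List.insertIdx_zero, List.set_cons_zero]
  abel

theorem Dvec_cons {n : ℕ} {I : List ℕ} (hn : 0 < n) (hI : I ∈ compositions) :
    Dvec (n :: I) = (if n = 1 then Finsupp.single I 1 else Finsupp.single ((n - 1) :: I) 1) +
      consOp n (Dvec I) := by
  rw [Dvec_eq (cons_mem_compositions.2 ⟨hn, hI⟩), Dvec_eq hI, map_sum, List.length_cons,
    sum_range_succ', add_comm]
  simp only [apply_ite (consOp n), consOp_single, List.getD_cons_succ, List.getD_cons_zero,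
    List.eraseIdx_cons_succ, List.set_cons_succ, List.eraseIdx_cons_zero, List.set_cons_zero]

-- A part `0` breaks the cons rule for `Uvec`, so the operator identities below hold only here.
abbrev compositionSpace : Submodule ℚ (List ℕ →₀ ℚ) := Finsupp.supported ℚ ℚ compositions

theorem Uvec_mem_compositionSpace {I : List ℕ} (hI : I ∈ compositions) :
    Uvec I ∈ compositionSpace := by
  rw [Uvec_eq hI]
  refine add_mem (sum_mem fun i hi => Finsupp.single_mem_supported ℚ _ ?_)
    (sum_mem fun _ _ => Finsupp.single_mem_supported ℚ _ (set_mem_compositions hI (Nat.succ_pos _)))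
  exact insertIdx_mem_compositions hI (Nat.lt_succ_iff.1 (mem_range.1 hi))

theorem Dvec_mem_compositionSpace {I : List ℕ} (hI : I ∈ compositions) :
    Dvec I ∈ compositionSpace := by
  rw [Dvec_eq hI]
  refine sum_mem fun i hi => ?_
  split_ifs
  · exact Finsupp.single_mem_supported ℚ _ (eraseIdx_mem_compositions hI i)
  · have := one_le_getD hI (mem_range.1 hi)
    exact Finsupp.single_mem_supported ℚ _ (set_mem_compositions hI (by omega))

theorem consOp_mem_compositionSpace {x : List ℕ →₀ ℚ} (hx : x ∈ compositionSpace) {n : ℕ}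
    (hn : 0 < n) :
    consOp n x ∈ compositionSpace :=
  Finsupp.map_mem_of_mem_supported _ (fun K hK => by
    rw [consOp_single]
    exact Finsupp.single_mem_supported ℚ _ (cons_mem_compositions.2 ⟨hn, hK⟩)) hx

theorem Uop_mem_compositionSpace {x : List ℕ →₀ ℚ} (hx : x ∈ compositionSpace) :
    Uop x ∈ compositionSpace :=
  Finsupp.map_mem_of_mem_supported _ (fun K hK => by
    rw [Uop_single]; exact Uvec_mem_compositionSpace hK) hx

theorem Dop_mem_compositionSpace {x : List ℕ →₀ ℚ} (hx : x ∈ compositionSpace) :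
    Dop x ∈ compositionSpace :=
  Finsupp.map_mem_of_mem_supported _ (fun K hK => by
    rw [Dop_single]; exact Dvec_mem_compositionSpace hK) hx

theorem Uop_consOp {x : List ℕ →₀ ℚ} (hx : x ∈ compositionSpace) {n : ℕ} (hn : 0 < n) :
    Uop (consOp n x) = consOp 1 (consOp n x) + consOp (n + 1) x + consOp n (Uop x) :=
  Finsupp.eqOn_supported_of_single (L := Uop ∘ₗ consOp n)
    (L' := consOp 1 ∘ₗ consOp n + consOp (n + 1) + consOp n ∘ₗ Uop) (fun K hK => by
      simp only [LinearMap.add_apply, LinearMap.comp_apply, consOp_single, Uop_single,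
        Uvec_cons hn hK]) hx

theorem Dop_consOp {x : List ℕ →₀ ℚ} (hx : x ∈ compositionSpace) {n : ℕ} (hn : 0 < n) :
    Dop (consOp n x) = (if n = 1 then x else consOp (n - 1) x) + consOp n (Dop x) := by
  have key := Finsupp.eqOn_supported_of_single (L := Dop ∘ₗ consOp n)
    (L' := (if n = 1 then LinearMap.id else consOp (n - 1)) + consOp n ∘ₗ Dop) (fun K hK => by
      simp only [LinearMap.add_apply, LinearMap.comp_apply, consOp_single, Dop_single,
        Dvec_cons hn hK]
      split_ifs <;> simp [consOp_single]) hx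
  split_ifs at key ⊢ <;> exact key

theorem commutator_consOp {x : List ℕ →₀ ℚ} (hx : x ∈ compositionSpace)
    {n : ℕ} (hn : 0 < n) :
    Dop (Uop (consOp n x)) - Uop (Dop (consOp n x)) =
      consOp n (Dop (Uop x) - Uop (Dop x)) + (if n = 1 then 3 else 1 : ℚ) • consOp n x := by
  rw [Uop_consOp hx hn, map_add, map_add, Dop_consOp (consOp_mem_compositionSpace hx hn) one_pos,
    Dop_consOp hx (by omega : 0 < n + 1), Dop_consOp (Uop_mem_compositionSpace hx) hn,
    Dop_consOp hx hn, map_add Uop, Uop_consOp (Dop_mem_compositionSpace hx) hn]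
  match n, hn with
  | 1, _ =>
    simp only [reduceIte, Nat.reduceAdd, Nat.reduceEqDiff, map_add, map_sub]
    module
  | m + 2, _ =>
    simp only [reduceIte, Nat.reduceEqDiff, Nat.add_one_sub_one, map_add, map_sub]
    rw [Uop_consOp hx (by omega : 0 < m + 1)]
    module

/-- `(DU − UD)(I) = (ℓ(I) + 2m₁(I) + 1)·I` for every integer composition
`I`. -/
theorem commutator_eq (I : List ℕ) (hpos : ∀ a ∈ I, 0 < a) :
    Dop (Uop (Finsupp.single I 1)) - Uop (Dop (Finsupp.single I 1)) =
      ((I.length : ℚ) + 2 * I.count 1 + 1) • Finsupp.single I 1 := by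
  induction I with
  | nil =>
    have hU : Uvec [] = Finsupp.single [1] 1 := by simp [Uvec_eq hpos]
    have hD : Dvec [] = 0 := by simp [Dvec_eq hpos]
    simp [Uop_single, Dop_single, hU, hD, Dvec_cons one_pos hpos]
  | cons n I ih =>
    obtain ⟨hn, hI⟩ := cons_mem_compositions.1 hpos
    rw [← consOp_single, commutator_consOp (Finsupp.single_mem_supported ℚ 1 hI) hn, ih hI,
      map_smul, ← add_smul]
    congr 1
    simp only [List.length_cons, List.count_cons, beq_iff_eq]
    split_ifs <;> push_cast <;> ring

end CompositionUD
end

section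
/- Let P be the set of planar rooted trees, graded by the number of non-root vertices, with U(t) the sum of all planar rooted trees obtained by attaching a new edge and terminal vertex at each of the 2|t|+1 possible positions of t, and D(t) the sum of all trees obtained by deleting a terminal edge of t. Then (DU − UD)(t) = (2|t| + τ(t) + 1)·t for every planar rooted tree t, where τ(t) is the number of terminal (leaf) vertices of t. -/
/-! Statement 18: planar rooted trees, encoded as balanced bracket
arrangements (Dyck words over `Bool`, `true` = up-step). A tree with `n`
non-root vertices corresponds to a balanced word of length `2n`; attaching a
new edge-and-leaf corresponds to inserting an adjacent pair `true, false`, and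
deleting a terminal edge corresponds to removing an adjacent pair
`true, false`. Leaves correspond to occurrences of the factor
`true, false`. -/

namespace PlanarTreeUD

/-- A balanced bracket arrangement (Dyck word). -/
def IsDyck (w : List Bool) : Prop :=
  w.count true = w.count false ∧
    ∀ i : ℕ, (w.take i).count false ≤ (w.take i).count true

/-- The positions of terminal edges: indices `i` with `w i = true` and
`w (i+1) = false`. -/
def leafPositions (w : List Bool) : Finset ℕ :=
  (Finset.range (w.length - 1)).filter fun i =>
    w.getD i false = true ∧ w.getD (i + 1) true = false

/-- The number of terminal (leaf) vertices `τ(t)`. -/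
def tau (w : List Bool) : ℕ := (leafPositions w).card

/-- `U(t)`: attach a new edge and terminal vertex at each of the `2|t|+1`
possible positions, i.e. insert an adjacent pair `true, false` at each of the
`length + 1` positions of the word. -/
noncomputable def Uvec (w : List Bool) : List Bool →₀ ℚ :=
  ∑ i ∈ Finset.range (w.length + 1),
    Finsupp.single (w.take i ++ true :: false :: w.drop i) 1

/-- `D(t)`: delete a terminal edge of `t` in each possible way, i.e. remove an
adjacent pair `true, false`. -/
noncomputable def Dvec (w : List Bool) : List Bool →₀ ℚ :=
  ∑ i ∈ leafPositions w, Finsupp.single (w.take i ++ w.drop (i + 2)) 1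

/-- The up operator. -/
noncomputable def Uop : (List Bool →₀ ℚ) →ₗ[ℚ] (List Bool →₀ ℚ) :=
  Finsupp.lsum ℚ fun w => LinearMap.toSpanSingleton ℚ _ (Uvec w)

/-- The down operator. -/
noncomputable def Dop : (List Bool →₀ ℚ) →ₗ[ℚ] (List Bool →₀ ℚ) :=
  Finsupp.lsum ℚ fun w => LinearMap.toSpanSingleton ℚ _ (Dvec w)

/-! Write `L_c` for prepending the letter `c` and `S` for stripping a leading `false` (killing
words that do not start with it). On words, `U L_c = L_c U + L_true L_false L_c`,
`D L_false = L_false D` and `D L_true = L_true D + S`, the last term being the leaf that the new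
`true` forms with a following `false`; moreover `S U = U S`. Hence
`[D, U] L_false = L_false [D, U] + L_false` and
`[D, U] L_true = L_true [D, U] + L_true + L_true L_false S`, so by induction on the word every
letter adds `1` to the eigenvalue and every factor `true, false` adds one more. -/

noncomputable def consOp (c : Bool) : Module.End ℚ (List Bool →₀ ℚ) :=
  Finsupp.lmapDomain ℚ ℚ (c :: ·)

noncomputable def dropFalse : Module.End ℚ (List Bool →₀ ℚ) :=
  Finsupp.lsum ℚ fun w => if w.head? = some false then Finsupp.lsingle w.tail else 0

@[simp]
lemma consOp_single (c : Bool) (w : List Bool) (b : ℚ) :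
    consOp c (Finsupp.single w b) = Finsupp.single (c :: w) b := by
  simp [consOp]

@[simp]
lemma dropFalse_single (w : List Bool) (b : ℚ) :
    dropFalse (Finsupp.single w b) =
      if w.head? = some false then Finsupp.single w.tail b else 0 := by
  simp only [dropFalse, Finsupp.lsum_single]
  split_ifs <;> simp

lemma Uop_single (w : List Bool) (b : ℚ) : Uop (Finsupp.single w b) = b • Uvec w := by
  simp [Uop]

lemma Dop_single (w : List Bool) (b : ℚ) : Dop (Finsupp.single w b) = b • Dvec w := by
  simp [Dop]

lemma Uvec_nil : Uvec [] = Finsupp.single [true, false] 1 := by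
  simp [Uvec]

lemma Uvec_cons (c : Bool) (w : List Bool) :
    Uvec (c :: w) = consOp c (Uvec w) + Finsupp.single (true :: false :: c :: w) 1 := by
  rw [Uvec, List.length_cons, Finset.sum_range_succ', Uvec, map_sum]
  simp

lemma Dvec_nil : Dvec [] = 0 := by
  simp [Dvec, leafPositions]

lemma tau_nil : tau [] = 0 := rfl

lemma zero_mem_leafPositions_cons (c : Bool) (w : List Bool) :
    0 ∈ leafPositions (c :: w) ↔ c = true ∧ w.head? = some false := by
  cases w <;> simp [leafPositions]

lemma succ_mem_leafPositions_cons (c : Bool) (w : List Bool) (i : ℕ) :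
    i + 1 ∈ leafPositions (c :: w) ↔ i ∈ leafPositions w := by
  simp only [leafPositions, Finset.mem_filter, Finset.mem_range, List.length_cons,
    List.getD_cons_succ]
  exact and_congr_left' (by omega)

lemma leafPositions_cons (c : Bool) (w : List Bool) :
    leafPositions (c :: w) =
      (if c = true ∧ w.head? = some false then {0} else ∅) ∪
        (leafPositions w).map (addRightEmbedding 1) := by
  ext (_ | i) <;> split_ifs <;>
    simp_all [zero_mem_leafPositions_cons, succ_mem_leafPositions_cons]

lemma Dvec_cons (c : Bool) (w : List Bool) :
    Dvec (c :: w) =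
      consOp c (Dvec w) +
        if c = true ∧ w.head? = some false then Finsupp.single w.tail 1 else 0 := by
  rw [Dvec, leafPositions_cons, Finset.sum_union (by split_ifs <;> simp), add_comm, Dvec, map_sum]
  split_ifs <;> simp

lemma tau_cons (c : Bool) (w : List Bool) :
    tau (c :: w) = (if c = true ∧ w.head? = some false then 1 else 0) + tau w := by
  rw [tau, leafPositions_cons, Finset.card_union_of_disjoint (by split_ifs <;> simp)]
  split_ifs <;> simp [tau]

section

variable (x : List Bool →₀ ℚ)

lemma Uop_consOp (c : Bool) :
    Uop (consOp c x) = consOp c (Uop x) + consOp true (consOp false (consOp c x)) := by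
  suffices h : Uop * consOp c = consOp c * Uop + consOp true * consOp false * consOp c from
    LinearMap.congr_fun h x
  exact Finsupp.lhom_ext fun w b => by simp [Uop_single, Uvec_cons]

lemma Dop_consOp_false : Dop (consOp false x) = consOp false (Dop x) := by
  suffices h : Dop * consOp false = consOp false * Dop from LinearMap.congr_fun h x
  exact Finsupp.lhom_ext fun w b => by simp [Dop_single, Dvec_cons]

lemma Dop_consOp_true :
    Dop (consOp true x) = consOp true (Dop x) + dropFalse x := by
  suffices h : Dop * consOp true = consOp true * Dop + dropFalse from LinearMap.congr_fun h x
  refine Finsupp.lhom_ext fun w b => ?_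
  by_cases hw : w.head? = some false <;> simp [hw, Dop_single, Dvec_cons]

lemma dropFalse_consOp_false : dropFalse (consOp false x) = x := by
  suffices h : dropFalse * consOp false = 1 from LinearMap.congr_fun h x
  exact Finsupp.lhom_ext fun w b => by simp

lemma dropFalse_consOp_true : dropFalse (consOp true x) = 0 := by
  suffices h : dropFalse * consOp true = 0 from LinearMap.congr_fun h x
  exact Finsupp.lhom_ext fun w b => by simp

lemma dropFalse_Uop : dropFalse (Uop x) = Uop (dropFalse x) := by
  suffices h : dropFalse * Uop = Uop * dropFalse from LinearMap.congr_fun h x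
  refine Finsupp.lhom_ext fun w b => ?_
  rcases w with _ | ⟨_ | _, w⟩ <;>
    simp [Uop_single, Uvec_nil, Uvec_cons, dropFalse_consOp_false, dropFalse_consOp_true]

lemma lie_Dop_Uop_apply : ⁅Dop, Uop⁆ x = Dop (Uop x) - Uop (Dop x) := rfl

lemma lie_Dop_Uop_consOp_false :
    ⁅Dop, Uop⁆ (consOp false x) = consOp false (⁅Dop, Uop⁆ x) + consOp false x := by
  simp only [lie_Dop_Uop_apply, Uop_consOp, Dop_consOp_false, Dop_consOp_true,
    dropFalse_consOp_false, map_add, map_sub]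
  abel

lemma lie_Dop_Uop_consOp_true :
    ⁅Dop, Uop⁆ (consOp true x) =
      consOp true (⁅Dop, Uop⁆ x) + consOp true x + consOp true (consOp false (dropFalse x)) := by
  simp only [lie_Dop_Uop_apply, Uop_consOp, Dop_consOp_false, Dop_consOp_true,
    dropFalse_consOp_false, dropFalse_Uop, map_add, map_sub]
  abel

end

lemma lie_Dop_Uop_single (w : List Bool) :
    ⁅Dop, Uop⁆ (Finsupp.single w 1) = ((w.length : ℚ) + tau w + 1) • Finsupp.single w 1 := by
  induction w with
  | nil => simp [lie_Dop_Uop_apply, Uop_single, Dop_single, Uvec_nil, Dvec_cons, Dvec_nil,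
      tau_nil]
  | cons c w ih =>
    rw [← consOp_single, List.length_cons, tau_cons]
    cases c with
    | false =>
      rw [lie_Dop_Uop_consOp_false, ih, map_smul, consOp_single, if_neg (by simp)]
      push_cast
      module
    | true =>
      rw [lie_Dop_Uop_consOp_true, ih, map_smul, consOp_single, dropFalse_single]
      by_cases hw : w.head? = some false
      · obtain ⟨v, rfl⟩ := List.head?_eq_some_iff.mp hw
        rw [if_pos hw, if_pos (by simp), List.tail_cons, consOp_single, consOp_single]
        push_cast
        module
      · rw [if_neg hw, if_neg (by simp [hw]), map_zero, map_zero]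
        push_cast
        module

theorem commutator_eq_general (w : List Bool) :
    Dop (Uop (Finsupp.single w 1)) - Uop (Dop (Finsupp.single w 1)) =
      ((w.length : ℚ) + tau w + 1) • Finsupp.single w 1 :=
  lie_Dop_Uop_single w

/-- `(DU − UD)(t) = (2|t| + τ(t) + 1)·t` for every planar rooted tree `t`
(note `2|t| = length of the word`). -/
theorem commutator_eq (w : List Bool) (hw : IsDyck w) :
    Dop (Uop (Finsupp.single w 1)) - Uop (Dop (Finsupp.single w 1)) =
      ((w.length : ℚ) + tau w + 1) • Finsupp.single w 1 :=
  commutator_eq_general w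

end PlanarTreeUD
end
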